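/- arXiv:1408.4229 — 12 statements merged into one kernel-verified Lean document; each statement's English description precedes it below -/
import Mathlib

section
/- Let u : [0,∞) → ℝ be continuous with u(0) = x₀ ≥ 0. Define v(t) = sup_{0≤s≤t} max(-u(s), 0) and x(t) = u(t) + v(t). Then x(t) ≥ 0 for all t, v is nondecreasing with v(0) = 0, and v increases only when x = 0 (i.e., if v(t₂) > v(t₁) for t₁ < t₂, then x(s) = 0 for some s ∈ [t₁, t₂]). -/
open Set

/-!
The regulator `v` is the running maximum of `f = max (-u) 0`, so `x = u + v ≥ u + f ≥ 0`.
If `v` increases on `[t₁, t₂]`, the maximum of `f` over `[0, t₂]` is attained at some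
`s ∈ (t₁, t₂]`; there `v s = f s > 0`, hence `f s = -u s` and `x s = 0`.
-/

section RunningSup

variable {α β : Type*} [ConditionallyCompleteLinearOrder α] [TopologicalSpace α] [OrderTopology α]
  [ConditionallyCompleteLinearOrder β] [TopologicalSpace β] [OrderTopology β]
  {f : α → β} {a s t t₁ t₂ : α}

theorem le_sSup_image_Icc (hf : Continuous f) (has : a ≤ s) (hst : s ≤ t) :
    f s ≤ sSup (f '' Icc a t) :=
  le_csSup (isCompact_Icc.image hf).bddAbove ⟨s, ⟨has, hst⟩, rfl⟩

theorem sSup_image_Icc_mono (hf : Continuous f) (ha : a ≤ t₁) (h : t₁ ≤ t₂) :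
    sSup (f '' Icc a t₁) ≤ sSup (f '' Icc a t₂) :=
  csSup_le_csSup (isCompact_Icc.image hf).bddAbove ((nonempty_Icc.2 ha).image f)
    (image_mono (Icc_subset_Icc le_rfl h))

theorem exists_eq_sSup_image_Icc_of_lt (hf : Continuous f) (ha : a ≤ t₁) (h : t₁ ≤ t₂)
    (hlt : sSup (f '' Icc a t₁) < sSup (f '' Icc a t₂)) :
    ∃ s ∈ Ioc t₁ t₂, f s = sSup (f '' Icc a s) ∧ sSup (f '' Icc a t₁) < f s := by
  obtain ⟨s, ⟨has, hst₂⟩, hmax⟩ :=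
    isCompact_Icc.exists_sSup_image_eq (nonempty_Icc.2 (ha.trans h)) hf.continuousOn
  have ht₁s : t₁ < s := by
    by_contra! hst₁
    exact (le_sSup_image_Icc hf has hst₁).not_gt (hmax ▸ hlt)
  refine ⟨s, ⟨ht₁s, hst₂⟩, le_antisymm (le_sSup_image_Icc hf has le_rfl) ?_, hmax ▸ hlt⟩
  exact hmax ▸ sSup_image_Icc_mono hf has hst₂

end RunningSup

/-- Skorokhod reflection for a single queue: nonnegativity of the reflected
process, the regulator is zero at time zero, nondecreasing, and increases
only when the reflected process touches zero. -/
theorem skorokhod_reflection_properties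
    (u : ℝ → ℝ) (x₀ : ℝ) (hu : Continuous u) (hu0 : u 0 = x₀) (hx₀ : 0 ≤ x₀)
    (v x : ℝ → ℝ)
    (hv : ∀ t, v t = sSup ((fun s => max (-u s) 0) '' Icc 0 t))
    (hx : ∀ t, x t = u t + v t) :
    (∀ t, 0 ≤ t → 0 ≤ x t) ∧
    v 0 = 0 ∧
    (∀ t₁ t₂, 0 ≤ t₁ → t₁ ≤ t₂ → v t₁ ≤ v t₂) ∧
    (∀ t₁ t₂, 0 ≤ t₁ → t₁ < t₂ → v t₁ < v t₂ → ∃ s ∈ Icc t₁ t₂, x s = 0) := by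
  have hf : Continuous fun s => max (-u s) 0 := hu.neg.max continuous_const
  have hle (s t : ℝ) (hs : 0 ≤ s) (hst : s ≤ t) : max (-u s) 0 ≤ v t :=
    hv t ▸ le_sSup_image_Icc hf hs hst
  refine ⟨fun t ht => ?_, ?_, fun t₁ t₂ h₁ h => ?_, fun t₁ t₂ h₁ h hlt => ?_⟩
  · linarith [hx t, hle t t ht le_rfl, le_max_left (-u t) 0]
  · rw [hv, Icc_self, image_singleton, csSup_singleton, hu0, max_eq_right (neg_nonpos.2 hx₀)]
  · simpa only [hv] using sSup_image_Icc_mono hf h₁ h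
  · rw [hv, hv] at hlt
    obtain ⟨s, ⟨ht₁s, hst₂⟩, hfs, hfs_gt⟩ := exists_eq_sSup_image_Icc_of_lt hf h₁ h.le hlt
    have hpos : 0 < max (-u s) 0 :=
      ((le_max_right _ _).trans (hle t₁ t₁ h₁ le_rfl)).trans_lt (hv t₁ ▸ hfs_gt)
    have hus : 0 ≤ -u s := by
      by_contra! hneg
      exact hpos.ne' (max_eq_right hneg.le)
    refine ⟨s, ⟨ht₁s.le, hst₂⟩, ?_⟩
    rw [hx, hv, ← hfs, max_eq_left hus, add_neg_cancel]
end

section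
/- Let u : [0,∞) → ℝ be continuous with u(0) ≥ 0. Suppose (x, v) and (q, w) are two pairs of continuous functions satisfying: x = u + v, x ≥ 0, v nondecreasing with v(0) = 0, and v increases only at times t where x(t) = 0 (i.e., ∫ x dv = 0); and similarly for (q, w). Then x = q and v = w. -/
open Set

lemma skorokhod_aux
    (u x v q w : ℝ → ℝ)
    (hvc : Continuous v) (hwc : Continuous w)
    (hx : ∀ t, 0 ≤ t → x t = u t + v t)
    (hv0 : v 0 = 0)
    (hvflat : ∀ t₁ t₂, 0 ≤ t₁ → t₁ ≤ t₂ → (∀ s ∈ Icc t₁ t₂, 0 < x s) → v t₁ = v t₂)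
    (hq : ∀ t, 0 ≤ t → q t = u t + w t)
    (hqpos : ∀ t, 0 ≤ t → 0 ≤ q t)
    (hw0 : w 0 = 0)
    (hwmono : ∀ t₁ t₂, 0 ≤ t₁ → t₁ ≤ t₂ → w t₁ ≤ w t₂) :
    ∀ t, 0 ≤ t → v t ≤ w t := by
  intro t ht
  by_contra hlt
  push_neg at hlt
  set S : Set ℝ := {s | s ∈ Icc 0 t ∧ v s ≤ w s} with hS
  have hSne : S.Nonempty := ⟨0, ⟨le_refl 0, ht⟩, by rw [hv0, hw0]⟩
  have hSbdd : BddAbove S := ⟨t, fun s hs => hs.1.2⟩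
  have hSclosed : IsClosed S := by
    have : S = (Icc 0 t) ∩ {s | v s ≤ w s} := by ext s; simp [hS, Set.mem_setOf_eq]
    rw [this]
    exact isClosed_Icc.inter (isClosed_le hvc hwc)
  set τ := sSup S with hτ
  have hτS : τ ∈ S := hSclosed.csSup_mem hSne hSbdd
  have hτ0 : 0 ≤ τ := hτS.1.1
  have hτt : τ ≤ t := hτS.1.2
  have hτlt : τ < t := lt_of_le_of_ne hτt (by intro h; rw [h] at hτS; exact absurd hτS.2 (not_le.2 hlt))
  -- on (τ, t], w < v hence x > 0
  have hxIoc : ∀ s ∈ Ioc τ t, 0 < x s := by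
    intro s hs
    have hs0 : 0 ≤ s := le_trans hτ0 hs.1.le
    have hwv : w s < v s := by
      by_contra h
      push_neg at h
      have : s ≤ τ := le_csSup hSbdd ⟨⟨hs0, hs.2⟩, h⟩
      exact absurd hs.1 (not_lt.2 this)
    have := hqpos s hs0
    rw [hq s hs0] at this
    rw [hx s hs0]
    linarith
  have hvconst : ∀ s ∈ Ioc τ t, v s = v t := by
    intro s hs
    exact hvflat s t (le_trans hτ0 hs.1.le) hs.2
      (fun r hr => hxIoc r ⟨lt_of_lt_of_le hs.1 hr.1, hr.2⟩)
  -- continuity: v τ = v t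
  have hne : (nhdsWithin τ (Ioc τ t)).NeBot := left_nhdsWithin_Ioc_neBot hτlt
  have h1 : Filter.Tendsto v (nhdsWithin τ (Ioc τ t)) (nhds (v τ)) :=
    (hvc.tendsto τ).mono_left nhdsWithin_le_nhds
  have h2 : Filter.Tendsto v (nhdsWithin τ (Ioc τ t)) (nhds (v t)) := by
    apply Filter.Tendsto.congr' _ tendsto_const_nhds
    filter_upwards [self_mem_nhdsWithin] with s hs
    exact (hvconst s hs).symm
  have hvτt : v τ = v t := tendsto_nhds_unique h1 h2
  have : v t ≤ w t := by
    calc v t = v τ := hvτt.symm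
    _ ≤ w τ := hτS.2
    _ ≤ w t := hwmono τ t hτ0 hτt
  linarith

/-- Uniqueness of the solution of the one-dimensional Skorokhod reflection
problem: two reflected/regulator pairs for the same free process `u` coincide
on `[0, ∞)`.  The complementarity condition "`v` increases only when `x = 0`"
is expressed as: `v` is constant on any interval where `x` stays positive. -/
theorem skorokhod_reflection_unique
    (u x v q w : ℝ → ℝ) (hu : Continuous u) (hu0 : 0 ≤ u 0)
    (hxc : Continuous x) (hvc : Continuous v)
    (hqc : Continuous q) (hwc : Continuous w)
    (hx : ∀ t, 0 ≤ t → x t = u t + v t)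
    (hxpos : ∀ t, 0 ≤ t → 0 ≤ x t)
    (hv0 : v 0 = 0)
    (hvmono : ∀ t₁ t₂, 0 ≤ t₁ → t₁ ≤ t₂ → v t₁ ≤ v t₂)
    (hvflat : ∀ t₁ t₂, 0 ≤ t₁ → t₁ ≤ t₂ → (∀ s ∈ Icc t₁ t₂, 0 < x s) → v t₁ = v t₂)
    (hq : ∀ t, 0 ≤ t → q t = u t + w t)
    (hqpos : ∀ t, 0 ≤ t → 0 ≤ q t)
    (hw0 : w 0 = 0)
    (hwmono : ∀ t₁ t₂, 0 ≤ t₁ → t₁ ≤ t₂ → w t₁ ≤ w t₂)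
    (hwflat : ∀ t₁ t₂, 0 ≤ t₁ → t₁ ≤ t₂ → (∀ s ∈ Icc t₁ t₂, 0 < q s) → w t₁ = w t₂) :
    ∀ t, 0 ≤ t → x t = q t ∧ v t = w t := by
  have h1 := skorokhod_aux u x v q w hvc hwc hx hv0 hvflat hq hqpos hw0 hwmono
  have h2 := skorokhod_aux u q w x v hwc hvc hq hw0 hwflat hx hxpos hv0 hvmono
  intro t ht
  have hvw : v t = w t := le_antisymm (h1 t ht) (h2 t ht)
  exact ⟨by rw [hx t ht, hq t ht, hvw], hvw⟩
end

section
/- Let u : [0,∞) → ℝ be continuous with u(0) = 0 and u(t) → −∞ as t → ∞. Let x₀, x₀' ≥ 0 and define x(t) = x₀ + u(t) + ψ(x₀ + u)(t) and x'(t) = x₀' + u(t) + ψ(x₀' + u)(t), where ψ is the Skorokhod regulator. Then there exists T* ≥ 0 such that x(t) = x'(t) for all t ≥ T*. -/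
open Set Filter

/-- The Skorokhod regulator map. -/
noncomputable def psi (u : ℝ → ℝ) (t : ℝ) : ℝ :=
  sSup ((fun s => max (-u s) 0) '' Icc 0 t)

lemma psi_shift (u : ℝ → ℝ) (hu : Continuous u) (a t : ℝ) (ha : 0 ≤ a) (ht : 0 ≤ t)
    (h : a ≤ sSup ((fun s => -u s) '' Icc 0 t)) :
    psi (fun s => a + u s) t = sSup ((fun s => -u s) '' Icc 0 t) - a := by
  have hcomp : IsCompact (Icc (0:ℝ) t) := isCompact_Icc
  have hne : (Icc (0:ℝ) t).Nonempty := ⟨0, le_refl 0, ht⟩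
  have hcont : Continuous (fun s => -u s) := hu.neg
  -- maximum of -u on [0,t]
  obtain ⟨s₀, hs₀, hmax⟩ := hcomp.exists_isMaxOn hne hcont.continuousOn
  have hS : sSup ((fun s => -u s) '' Icc 0 t) = -u s₀ := by
    apply IsGreatest.csSup_eq
    exact ⟨⟨s₀, hs₀, rfl⟩, fun y ⟨s, hs, hsy⟩ => hsy ▸ hmax hs⟩
  rw [hS] at h ⊢
  unfold psi
  apply IsGreatest.csSup_eq
  constructor
  · refine ⟨s₀, hs₀, ?_⟩
    simp only [neg_add]
    rw [max_eq_left]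
    · ring
    · linarith
  · rintro y ⟨s, hs, rfl⟩
    simp only [neg_add]
    have := hmax hs
    simp only [isMaxOn_iff] at hmax
    have h1 : -u s ≤ -u s₀ := hmax s hs
    rw [max_le_iff]
    constructor <;> linarith

/-- Finite-time coupling of single-queue trajectories: if the net input drifts
to `-∞` (service exceeds arrivals on average), the queue trajectories from any
two initial conditions coincide after some finite time. -/
theorem queue_finite_time_coupling
    (u : ℝ → ℝ) (hu : Continuous u) (hu0 : u 0 = 0)
    (hdrift : Tendsto u atTop atBot)
    (x₀ x₀' : ℝ) (hx₀ : 0 ≤ x₀) (hx₀' : 0 ≤ x₀')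
    (x x' : ℝ → ℝ)
    (hx : ∀ t, x t = x₀ + u t + psi (fun s => x₀ + u s) t)
    (hx' : ∀ t, x' t = x₀' + u t + psi (fun s => x₀' + u s) t) :
    ∃ Tstar : ℝ, 0 ≤ Tstar ∧ ∀ t, Tstar ≤ t → x t = x' t := by
  obtain ⟨T, hT1, hT2⟩ :=
    ((hdrift.eventually (eventually_le_atBot (-(max x₀ x₀')))).and
      (eventually_ge_atTop (0:ℝ))).exists
  refine ⟨T, hT2, fun t htT => ?_⟩
  have ht : (0:ℝ) ≤ t := le_trans hT2 htT
  have hTmem : T ∈ Icc (0:ℝ) t := ⟨hT2, htT⟩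
  have hbdd : BddAbove ((fun s => -u s) '' Icc 0 t) :=
    (isCompact_Icc.image hu.neg).bddAbove
  have hle : max x₀ x₀' ≤ sSup ((fun s => -u s) '' Icc 0 t) := by
    calc max x₀ x₀' ≤ -u T := by linarith
    _ ≤ _ := le_csSup hbdd ⟨T, hTmem, rfl⟩
  rw [hx, hx', psi_shift u hu x₀ t hx₀ ht (le_trans (le_max_left _ _) hle),
    psi_shift u hu x₀' t hx₀' ht (le_trans (le_max_right _ _) hle)]
  ring
end

section
/- Let u : [0,∞) → ℝ be continuous with u(0) = 0, u(t+T) − u(t) = u(T) for all t (i.e., u has periodic increments with period T), and u(T) < 0. Then there exists a unique z₀ ≥ 0 such that the reflected trajectory z(t) = z₀ + u(t) + ψ(z₀ + u)(t) is periodic with period T: z(t+T) = z(t) for all t ≥ 0. -/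
open Set

lemma neg_image_ne (u : ℝ → ℝ) {t : ℝ} (ht : 0 ≤ t) :
    ((fun s => -u s) '' Icc 0 t).Nonempty :=
  ⟨-u 0, mem_image_of_mem _ (left_mem_Icc.2 ht)⟩

lemma neg_image_bdd {u : ℝ → ℝ} (hu : Continuous u) (t : ℝ) :
    BddAbove ((fun s => -u s) '' Icc 0 t) :=
  (isCompact_Icc.image (hu.neg)).bddAbove

lemma map_sSup_mono (h : ℝ → ℝ) (hm : Monotone h) (hc : Continuous h)
    (S : Set ℝ) (hne : S.Nonempty) (hbdd : BddAbove S) :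
    sSup (h '' S) = h (sSup S) :=
  (hm.map_csSup_of_continuousAt hc.continuousAt hne hbdd).symm

lemma psi_eq {u : ℝ → ℝ} (hu : Continuous u) (z t : ℝ) (ht : 0 ≤ t) :
    psi (fun s => z + u s) t
      = max (sSup ((fun s => -u s) '' Icc 0 t)) z - z := by
  have himg : (fun s => max (-(z + u s)) 0) '' Icc 0 t
      = (fun x => max x z - z) '' ((fun s => -u s) '' Icc 0 t) := by
    rw [← image_comp]
    apply image_congr
    intro s _
    simp only [Function.comp]
    rw [← max_sub_sub_right, sub_self]
    congr 1
    ring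
  have hmono : Monotone (fun x : ℝ => max x z - z) := by
    intro a b hab
    simp only
    gcongr
  have hcont : Continuous (fun x : ℝ => max x z - z) :=
    (continuous_id.max continuous_const).sub continuous_const
  rw [psi]
  rw [himg,
    map_sSup_mono _ hmono hcont _ (neg_image_ne u ht) (neg_image_bdd hu t)]

lemma S_shift {u : ℝ → ℝ} {T : ℝ} (hu : Continuous u) (hT : 0 < T)
    (hper : ∀ t, u (t + T) - u t = u T) {t : ℝ} (ht : 0 ≤ t) :
    sSup ((fun s => -u s) '' Icc 0 (t + T))
      = max (sSup ((fun s => -u s) '' Icc 0 T))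
          (sSup ((fun s => -u s) '' Icc 0 t) - u T) := by
  have hsplit : Icc (0:ℝ) (t + T) = Icc 0 T ∪ Icc T (t + T) :=
    (Icc_union_Icc_eq_Icc hT.le (by linarith)).symm
  have himg2 : (fun s => -u s) '' Icc T (t + T)
      = (fun x => x - u T) '' ((fun s => -u s) '' Icc 0 t) := by
    have h1 : Icc T (t + T) = (fun s => s + T) '' Icc 0 t := by
      rw [image_add_const_Icc, zero_add]
    rw [h1, ← image_comp, ← image_comp]
    apply image_congr
    intro s _
    simp only [Function.comp]
    have := hper s
    linarith [hper s]
  have hbdd2 : BddAbove ((fun s => -u s) '' Icc T (t + T)) :=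
    (isCompact_Icc.image hu.neg).bddAbove
  have hne2 : ((fun s => -u s) '' Icc T (t + T)).Nonempty :=
    ⟨-u T, mem_image_of_mem _ (left_mem_Icc.2 (by linarith))⟩
  rw [hsplit, image_union,
    csSup_union (neg_image_bdd hu T) (neg_image_ne u hT.le) hbdd2 hne2,
    himg2,
    map_sSup_mono (fun x => x - u T) (fun a b hab => by simp only; linarith)
      (by fun_prop) _ (neg_image_ne u ht)
      (neg_image_bdd hu t)]

/-- Existence and uniqueness of a periodic orbit for a single queue under
periodic fixed-time control: if the net input `u` has `T`-periodic increments
and negative drift `u T < 0`, there is a unique initial condition `z₀ ≥ 0`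
whose reflected trajectory is `T`-periodic. -/
theorem unique_periodic_orbit
    (u : ℝ → ℝ) (T : ℝ) (hT : 0 < T)
    (hu : Continuous u) (hu0 : u 0 = 0)
    (hper : ∀ t, u (t + T) - u t = u T) (hneg : u T < 0) :
    ∃! z₀ : ℝ, 0 ≤ z₀ ∧
      ∀ t, 0 ≤ t →
        z₀ + u (t + T) + psi (fun s => z₀ + u s) (t + T)
          = z₀ + u t + psi (fun s => z₀ + u s) t := by
  set A := sSup ((fun s => -u s) '' Icc 0 T) with hA
  have hATmem : -u T ∈ (fun s => -u s) '' Icc 0 T :=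
    mem_image_of_mem _ (right_mem_Icc.2 hT.le)
  have hAT : -u T ≤ A := le_csSup (neg_image_bdd hu T) hATmem
  have hA0mem : -u 0 ∈ (fun s => -u s) '' Icc 0 T :=
    mem_image_of_mem _ (left_mem_Icc.2 hT.le)
  have hA0 : 0 ≤ A := by
    have := le_csSup (neg_image_bdd hu T) hA0mem
    rw [hu0] at this; simpa using this
  have hS0 : sSup ((fun s => -u s) '' Icc 0 (0:ℝ)) = 0 := by
    rw [Icc_self, image_singleton, csSup_singleton, hu0, neg_zero]
  refine ⟨A + u T, ⟨by linarith, ?_⟩, ?_⟩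
  · intro t ht
    rw [psi_eq hu _ _ (by linarith : (0:ℝ) ≤ t + T), psi_eq hu _ _ ht,
      S_shift hu hT hper ht]
    set St := sSup ((fun s => -u s) '' Icc 0 t) with hSt
    have huT : u (t + T) = u t + u T := by linarith [hper t]
    have h1 : max (max A (St - u T)) (A + u T) = max A (St - u T) :=
      max_eq_left (le_trans (by linarith) (le_max_left A (St - u T)))
    have h2 : max St (A + u T) - u T = max (St - u T) A := by
      rw [← max_sub_sub_right]
      congr 1
      ring
    rw [h1, huT]
    have : max A (St - u T) = max (St - u T) A := max_comm _ _
    linarith [h2, this]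
  · rintro y ⟨hy0, hy⟩
    have h0 := hy 0 le_rfl
    rw [psi_eq hu _ _ (by linarith : (0:ℝ) ≤ 0 + T),
      psi_eq hu _ _ le_rfl, zero_add, hS0, hu0] at h0
    have hmax0 : max (0:ℝ) y = y := max_eq_right hy0
    rw [hmax0] at h0
    -- h0 : y + u T + (max A y - y) = y + 0 + (y - y)
    rcases le_total A y with h | h
    · rw [max_eq_right h] at h0; linarith
    · rw [max_eq_left h] at h0; linarith
end

section
/- Under the hypotheses of the previous statement (u continuous, u(0)=0, periodic increments with period T, u(T) < 0), the unique periodic trajectory z satisfies z(t₀) = 0 for some t₀ ∈ [0, T]; that is, the queue empties at least once per cycle. -/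
open Set

/-! The regulator `psi x T` is the maximum of `max (-x) 0` over `[0, T]`, attained at some
`t₀`; since `psi x` is nondecreasing, `psi x t₀ = psi x T`. When `psi x T > 0` this maximum is
`-x t₀`, so the regulated path `x + psi x` vanishes at `t₀`. For the periodic orbit,
`z T = z 0` forces `psi x T = psi x 0 - u T > 0`. -/

lemma psi_zero (x : ℝ → ℝ) : psi x 0 = max (-x 0) 0 := by
  rw [psi, Icc_self, image_singleton, csSup_singleton]

section Continuous

variable {x : ℝ → ℝ} (hx : Continuous x)
include hx

lemma bddAbove_image_max_neg_zero (t : ℝ) :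
    BddAbove ((fun s => max (-x s) 0) '' Icc 0 t) :=
  (isCompact_Icc.image (by fun_prop)).bddAbove

lemma le_psi {s t : ℝ} (hs : s ∈ Icc 0 t) : max (-x s) 0 ≤ psi x t :=
  le_csSup (bddAbove_image_max_neg_zero hx t) (mem_image_of_mem _ hs)

lemma psi_mono {s t : ℝ} (hs : 0 ≤ s) (hst : s ≤ t) : psi x s ≤ psi x t :=
  csSup_le_csSup (bddAbove_image_max_neg_zero hx t) ((nonempty_Icc.2 hs).image _)
    (image_mono (Icc_subset_Icc_right hst))

lemma exists_max_neg_zero_eq_psi {T : ℝ} (hT : 0 ≤ T) :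
    ∃ t₀ ∈ Icc 0 T, max (-x t₀) 0 = psi x T := by
  have hcont : Continuous fun s => max (-x s) 0 := by fun_prop
  obtain ⟨t₀, ht₀, h⟩ :=
    isCompact_Icc.exists_sSup_image_eq (nonempty_Icc.2 hT) hcont.continuousOn
  exact ⟨t₀, ht₀, h.symm⟩

lemma exists_add_psi_eq_zero {T : ℝ} (hT : 0 ≤ T) (hpos : 0 < psi x T) :
    ∃ t₀ ∈ Icc 0 T, x t₀ + psi x t₀ = 0 := by
  obtain ⟨t₀, ht₀, hmax⟩ := exists_max_neg_zero_eq_psi hx hT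
  have hpsi : psi x t₀ = psi x T :=
    (psi_mono hx ht₀.1 ht₀.2).antisymm (hmax ▸ le_psi hx (right_mem_Icc.2 ht₀.1))
  have hneg : max (-x t₀) 0 = -x t₀ := by
    rcases max_cases (-x t₀) 0 with h | h
    · exact h.1
    · linarith [h.1]
  exact ⟨t₀, ht₀, by linarith⟩

end Continuous

theorem periodic_orbit_clears_general
    (u : ℝ → ℝ) (T : ℝ) (hT : 0 < T)
    (hu : Continuous u) (hu0 : u 0 = 0)
    (hneg : u T < 0)
    (z₀ : ℝ)
    (z : ℝ → ℝ)
    (hz : ∀ t, z t = z₀ + u t + psi (fun s => z₀ + u s) t)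
    (hzper : ∀ t, 0 ≤ t → z (t + T) = z t) :
    ∃ t₀ ∈ Icc 0 T, z t₀ = 0 := by
  set x : ℝ → ℝ := fun s => z₀ + u s
  have hx : Continuous x := by fun_prop
  have hpos : 0 < psi x T := by
    have hzT : z T = z 0 := by simpa using hzper 0 le_rfl
    rw [hz, hz, hu0] at hzT
    linarith [psi_zero x, le_max_right (-x 0) 0]
  obtain ⟨t₀, ht₀, h⟩ := exists_add_psi_eq_zero hx hT.le hpos
  exact ⟨t₀, ht₀, (hz t₀).trans h⟩

/-- The periodic trajectory of a stable single queue under periodic fixed-time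
control empties at least once per cycle. -/
theorem periodic_orbit_clears
    (u : ℝ → ℝ) (T : ℝ) (hT : 0 < T)
    (hu : Continuous u) (hu0 : u 0 = 0)
    (hper : ∀ t, u (t + T) - u t = u T) (hneg : u T < 0)
    (z₀ : ℝ) (hz₀ : 0 ≤ z₀)
    (z : ℝ → ℝ)
    (hz : ∀ t, z t = z₀ + u t + psi (fun s => z₀ + u s) t)
    (hzper : ∀ t, 0 ≤ t → z (t + T) = z t) :
    ∃ t₀ ∈ Icc 0 T, z t₀ = 0 :=
  periodic_orbit_clears_general u T hT hu hu0 hneg z₀ z hz hzper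
end

section
/- Let u : [0,∞) → ℝ be continuous with u(0) = 0, periodic increments of period T, and u(T) < 0. For any x₀ ≥ 0, the trajectory x(t) = x₀ + u(t) + ψ(x₀ + u)(t) coincides with the unique T-periodic trajectory z(t) for all t beyond some finite time T* (depending on x₀). -/
open Set

/-- Global finite-time convergence to the periodic orbit for a single queue:
every trajectory coincides with the unique `T`-periodic trajectory after some
finite time. -/
theorem finite_time_convergence_to_periodic_orbit
    (u : ℝ → ℝ) (T : ℝ) (hT : 0 < T)
    (hu : Continuous u) (hu0 : u 0 = 0)
    (hper : ∀ t, u (t + T) - u t = u T) (hneg : u T < 0)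
    (z₀ : ℝ) (hz₀ : 0 ≤ z₀)
    (z : ℝ → ℝ)
    (hz : ∀ t, z t = z₀ + u t + psi (fun s => z₀ + u s) t)
    (hzper : ∀ t, 0 ≤ t → z (t + T) = z t)
    (x₀ : ℝ) (hx₀ : 0 ≤ x₀)
    (x : ℝ → ℝ)
    (hx : ∀ t, x t = x₀ + u t + psi (fun s => x₀ + u s) t) :
    ∃ Tstar : ℝ, 0 ≤ Tstar ∧ ∀ t, Tstar ≤ t → x t = z t := by
  set c := max x₀ z₀ with hc_def
  have hc : 0 ≤ c := le_trans hx₀ (le_max_left _ _)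
  obtain ⟨n, hn⟩ : ∃ n : ℕ, c ≤ (n : ℝ) * (-u T) := by
    obtain ⟨n, hn⟩ := exists_nat_ge (c / (-u T))
    exact ⟨n, (div_le_iff₀ (by linarith)).mp hn⟩
  have hunT : ∀ m : ℕ, u ((m : ℝ) * T) = (m : ℝ) * u T := by
    intro m
    induction m with
    | zero => simpa using hu0
    | succ k ih =>
      have h := hper ((k : ℝ) * T)
      push_cast
      push_cast at ih
      have : ((k : ℝ) + 1) * T = (k : ℝ) * T + T := by ring
      rw [this]
      linarith
  have key : ∀ a : ℝ, 0 ≤ a → a ≤ (n : ℝ) * (-u T) → ∀ t, (n : ℝ) * T ≤ t →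
      psi (fun s => a + u s) t = sSup ((fun s => -u s) '' Icc 0 t) - a := by
    intro a ha han t ht
    have hnT0 : (0 : ℝ) ≤ (n : ℝ) * T := by positivity
    have ht0 : (0 : ℝ) ≤ t := le_trans hnT0 ht
    have hcomp : IsCompact ((fun s => -u s) '' Icc 0 t) := isCompact_Icc.image hu.neg
    have hne : (Icc (0 : ℝ) t).Nonempty := nonempty_Icc.mpr ht0
    have hbdd : BddAbove ((fun s => -u s) '' Icc 0 t) := hcomp.bddAbove
    set M := sSup ((fun s => -u s) '' Icc 0 t) with hM_def
    have hM_ge : (n : ℝ) * (-u T) ≤ M := by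
      have hmem : (n : ℝ) * T ∈ Icc (0 : ℝ) t := ⟨hnT0, ht⟩
      have h1 : -u ((n : ℝ) * T) ∈ ((fun s => -u s) '' Icc 0 t) :=
        mem_image_of_mem _ hmem
      have h2 : (n : ℝ) * (-u T) = -u ((n : ℝ) * T) := by rw [hunT]; ring
      rw [h2]
      exact le_csSup hbdd h1
    have hMa : a ≤ M := le_trans han hM_ge
    obtain ⟨s₀, hs₀mem, hmax⟩ := isCompact_Icc.exists_isMaxOn hne hu.neg.continuousOn
    have hcont : Continuous (fun s => max (-(a + u s)) 0) :=
      ((continuous_const.add hu).neg).max continuous_const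
    have hbdd2 : BddAbove ((fun s => max (-(a + u s)) 0) '' Icc 0 t) :=
      (isCompact_Icc.image hcont).bddAbove
    unfold psi
    apply le_antisymm
    · apply csSup_le (hne.image _)
      rintro y ⟨s, hs, rfl⟩
      have h1 : -u s ≤ M := le_csSup hbdd (mem_image_of_mem _ hs)
      exact max_le (by simp only; linarith) (by linarith)
    · have hs₀M : -u s₀ = M :=
        le_antisymm (le_csSup hbdd (mem_image_of_mem _ hs₀mem))
          (csSup_le (hne.image _) (by rintro y ⟨s, hs, rfl⟩; exact hmax hs))
      have hmem : max (-(a + u s₀)) 0 ∈ ((fun s => max (-(a + u s)) 0) '' Icc 0 t) :=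
        mem_image_of_mem _ hs₀mem
      have hval : max (-(a + u s₀)) 0 = M - a := by
        rw [max_eq_left (by linarith)]; linarith
      rw [← hval]
      exact le_csSup hbdd2 hmem
  refine ⟨(n : ℝ) * T, by positivity, fun t ht => ?_⟩
  have hx' := key x₀ hx₀ (le_trans (le_max_left _ _) hn) t ht
  have hz' := key z₀ hz₀ (le_trans (le_max_right _ _) hn) t ht
  rw [hx t, hz t, hx', hz']
  ring
end

section
/- Let F : ℝ≥0 → ℝ≥0 be the Poincaré map F(x₀) = x(T) where x(t) = x₀ + u(t) + ψ(x₀+u)(t), with u continuous, u(0) = 0, periodic increments of period T, and u(T) < 0. Then: (a) F is monotone nondecreasing; (b) the sequence F^n(0) is nondecreasing and bounded, hence converges to a fixed point z₀ of F. -/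
open Set Filter

/-- The Poincaré map of the single queue under periodic fixed-time control is
monotone on nonnegative initial conditions, and its iterates from `0` form a
nondecreasing bounded sequence converging to a fixed point. -/
theorem poincare_map_monotone_and_converges
    (u : ℝ → ℝ) (T : ℝ) (hT : 0 < T)
    (hu : Continuous u) (hu0 : u 0 = 0)
    (hper : ∀ t, u (t + T) - u t = u T) (hneg : u T < 0)
    (F : ℝ → ℝ)
    (hF : ∀ x₀ : ℝ, F x₀ = x₀ + u T + psi (fun s => x₀ + u s) T) :
    (∀ x₀ x₀' : ℝ, 0 ≤ x₀ → x₀ ≤ x₀' → F x₀ ≤ F x₀') ∧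
    Monotone (fun n : ℕ => F^[n] 0) ∧
    (∃ M : ℝ, ∀ n : ℕ, F^[n] 0 ≤ M) ∧
    (∃ z₀ : ℝ, Tendsto (fun n : ℕ => F^[n] 0) atTop (nhds z₀) ∧ F z₀ = z₀) := by
  set C : ℝ := sSup ((fun s => u T - u s) '' Icc 0 T) with hC
  have hTm : T ∈ Icc (0:ℝ) T := ⟨hT.le, le_rfl⟩
  have hne : ((fun s => u T - u s) '' Icc 0 T).Nonempty := ⟨_, mem_image_of_mem _ hTm⟩
  have hbdd : BddAbove ((fun s => u T - u s) '' Icc 0 T) :=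
    isCompact_Icc.bddAbove_image (continuous_const.sub hu).continuousOn
  have hC0 : (0:ℝ) ≤ C := by
    have := le_csSup hbdd (mem_image_of_mem _ hTm)
    simpa using this
  have key : ∀ x₀ : ℝ, F x₀ = max C (x₀ + u T) := by
    intro x₀
    have hne2 : ((fun s => max (-(x₀ + u s)) 0) '' Icc 0 T).Nonempty :=
      ⟨_, mem_image_of_mem _ hTm⟩
    have hbdd2 : BddAbove ((fun s => max (-(x₀ + u s)) 0) '' Icc 0 T) :=
      isCompact_Icc.bddAbove_image
        (((continuous_const.add hu).neg.max continuous_const).continuousOn)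
    have hpsi : psi (fun s => x₀ + u s) T =
        sSup ((fun s => max (-(x₀ + u s)) 0) '' Icc 0 T) := rfl
    rw [hF, hpsi]
    apply le_antisymm
    · have h1 : sSup ((fun s => max (-(x₀ + u s)) 0) '' Icc 0 T) ≤ max (C - x₀ - u T) 0 := by
        apply csSup_le hne2
        rintro y ⟨s, hs, rfl⟩
        have h2 : u T - u s ≤ C := le_csSup hbdd (mem_image_of_mem _ hs)
        exact max_le_max (by linarith) le_rfl
      have h3 : x₀ + u T + max (C - x₀ - u T) 0 = max C (x₀ + u T) := by
        rcases le_total (C - x₀ - u T) 0 with h | h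
        · rw [max_eq_right h, max_eq_right (by linarith)]; ring
        · rw [max_eq_left h, max_eq_left (by linarith)]; ring
      linarith
    · apply max_le
      · have : C ≤ x₀ + u T + sSup ((fun s => max (-(x₀ + u s)) 0) '' Icc 0 T) := by
          apply csSup_le hne
          rintro y ⟨s, hs, rfl⟩
          have h2 : max (-(x₀ + u s)) 0 ≤
              sSup ((fun s => max (-(x₀ + u s)) 0) '' Icc 0 T) :=
            le_csSup hbdd2 (mem_image_of_mem _ hs)
          have h3 : -(x₀ + u s) ≤ max (-(x₀ + u s)) 0 := le_max_left _ _
          dsimp only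
          linarith
        exact this
      · have h0 : (0:ℝ) ≤ sSup ((fun s => max (-(x₀ + u s)) 0) '' Icc 0 T) :=
          le_trans (le_max_right _ _) (le_csSup hbdd2 (mem_image_of_mem _ hTm))
        linarith
  have hF0 : F 0 = C := by rw [key]; exact max_eq_left (by linarith)
  have hFC : F C = C := by rw [key]; exact max_eq_left (by linarith)
  have hit : ∀ n : ℕ, F^[n + 1] 0 = C := by
    intro n
    induction n with
    | zero => simpa using hF0
    | succ k ih => rw [Function.iterate_succ_apply', ih, hFC]
  refine ⟨fun x₀ x₀' _ h => by rw [key, key]; exact max_le_max le_rfl (by linarith), ?_, ?_, ?_⟩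
  · apply monotone_nat_of_le_succ
    intro n
    cases n with
    | zero => simpa [hF0] using hC0
    | succ k => rw [hit k, hit (k + 1)]
  · refine ⟨C, fun n => ?_⟩
    cases n with
    | zero => simpa using hC0
    | succ k => rw [hit k]
  · refine ⟨C, ?_, hFC⟩
    have hev : ∀ᶠ n : ℕ in atTop, C = F^[n] 0 := by
      filter_upwards [eventually_ge_atTop 1] with n hn
      obtain ⟨k, rfl⟩ := Nat.exists_eq_add_of_le hn
      rw [add_comm 1 k, hit k]
    exact Tendsto.congr' hev tendsto_const_nhds
end

section
/- Consider a network of n queues with periodic exogenous arrival rates e(i)(t) and service rates c(i)(t) of period T, routing matrix R with spectral radius less than 1, and link travel times τ(i,j) > 0. If a T-periodic solution of the network dynamics exists, with ē, c̄, ȳ denoting the per-period averages of arrivals, service rates, and unused service rates, then c̄ = (I − Rᵀ)⁻¹ ē + ȳ, and in particular c̄ ≥ (I − Rᵀ)⁻¹ ē componentwise. -/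
/-!
Integrating the dynamics of `x i` over one period gives `0`, because `x i` is periodic; and since
each `b j` is periodic, the delayed inflow `b j (· - τ j i)` has the same integral over a period as
`b j`. This is the flow balance `(1 - Rᵀ) b̄ = ē`. Since `R ^ k → 0`, some power of `R` is a
contraction, so `1 - R` (hence `1 - Rᵀ`) is invertible and `b̄ = (1 - Rᵀ)⁻¹ ē`. Finally
`c̄ = b̄ + ȳ` with `ȳ ≥ 0`.
-/

open Filter MeasureTheory Matrix Topology

theorem isUnit_one_sub_of_tendsto_pow_nhds_zero {A : Type*} [NormedRing A] [CompleteSpace A]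
    {r : A} (h : Tendsto (fun k : ℕ => r ^ k) atTop (𝓝 0)) : IsUnit (1 - r) := by
  obtain ⟨N, hN⟩ := (h.eventually (Metric.ball_mem_nhds 0 one_pos)).exists
  have hu : IsUnit ((1 - r) * ∑ i ∈ Finset.range N, r ^ i) := by
    rw [mul_neg_geom_sum]
    exact isUnit_one_sub_of_norm_lt_one (by simpa using hN)
  have hcomm : Commute (1 - r) (∑ i ∈ Finset.range N, r ^ i) :=
    (Commute.one_left _).sub_left (Commute.sum_right _ _ _ fun i _ => Commute.self_pow r i)
  exact (hcomm.isUnit_mul_iff.mp hu).1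

/- The `L∞` operator norm induces the product uniformity on matrices, so both the hypothesis and
the completeness of `Matrix ι ι α` transfer to this normed ring as they stand. -/
theorem Matrix.isUnit_one_sub_of_tendsto_pow_nhds_zero {ι α : Type*} [Fintype ι]
    [DecidableEq ι] [NormedRing α] [CompleteSpace α] {R : Matrix ι ι α}
    (h : Tendsto (fun k : ℕ => R ^ k) atTop (𝓝 0)) : IsUnit (1 - R) :=
  @_root_.isUnit_one_sub_of_tendsto_pow_nhds_zero _ Matrix.linftyOpNormedRing
    (Matrix.instCompleteSpace ι ι α) R h

theorem Function.Periodic.intervalIntegral_comp_sub {E : Type*} [NormedAddCommGroup E]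
    [NormedSpace ℝ E] {f : ℝ → E} {T : ℝ} (hf : Function.Periodic f T) (τ : ℝ) :
    ∫ t in (0:ℝ)..T, f (t - τ) = ∫ t in (0:ℝ)..T, f t := by
  rw [intervalIntegral.integral_comp_sub_right, zero_sub, sub_eq_neg_add]
  simpa using hf.intervalIntegral_add_eq (-τ) 0

theorem Function.Periodic.intervalIntegral_eq_zero_of_hasDerivAt {E : Type*}
    [NormedAddCommGroup E] [NormedSpace ℝ E] [CompleteSpace E] {x f : ℝ → E} {T : ℝ}
    (hx : Function.Periodic x T) (hderiv : ∀ t, HasDerivAt x (f t) t)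
    (hf : IntervalIntegrable f volume 0 T) : ∫ t in (0:ℝ)..T, f t = 0 := by
  rw [intervalIntegral.integral_eq_sub_of_hasDerivAt (fun t _ => hderiv t) hf, hx.eq, sub_self]

theorem one_sub_transpose_mulVec_integral_eq_of_periodic {ι : Type*} [Fintype ι]
    [DecidableEq ι] {R : Matrix ι ι ℝ} {τ : ι → ι → ℝ} {T : ℝ} {e b x : ι → ℝ → ℝ}
    (heint : ∀ i, IntervalIntegrable (e i) volume 0 T)
    (hbint : ∀ i s t, IntervalIntegrable (b i) volume s t)
    (hdyn : ∀ i t, HasDerivAt (x i) (e i t - b i t + ∑ j, b j (t - τ j i) * R j i) t)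
    (hxper : ∀ i, Function.Periodic (x i) T) (hbper : ∀ i, Function.Periodic (b i) T) :
    (1 - Rᵀ) *ᵥ (fun i => ∫ t in (0:ℝ)..T, b i t) = fun i => ∫ t in (0:ℝ)..T, e i t := by
  rw [sub_mulVec, one_mulVec, mulVec_transpose]
  funext i
  have hdelayed : ∀ j, IntervalIntegrable (fun t => b j (t - τ j i) * R j i) volume 0 T :=
    fun j => by
      simpa using ((hbint j (-τ j i) (T - τ j i)).comp_sub_right (τ j i)).mul_const (R j i)
  have hinflow : IntervalIntegrable (fun t => ∑ j, b j (t - τ j i) * R j i) volume 0 T := by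
    simpa only [Finset.sum_fn] using IntervalIntegrable.sum Finset.univ fun j _ => hdelayed j
  have hbalance := (hxper i).intervalIntegral_eq_zero_of_hasDerivAt (hdyn i)
    (((heint i).sub (hbint i 0 T)).add hinflow)
  rw [intervalIntegral.integral_add ((heint i).sub (hbint i 0 T)) hinflow,
    intervalIntegral.integral_sub (heint i) (hbint i 0 T),
    intervalIntegral.integral_finsetSum fun j _ => hdelayed j] at hbalance
  simp only [intervalIntegral.integral_mul_const, (hbper _).intervalIntegral_comp_sub] at hbalance
  rw [Pi.sub_apply, vecMul, dotProduct]
  linarith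

theorem periodic_solution_flow_balance_general
    (n : ℕ) (R : Matrix (Fin n) (Fin n) ℝ)
    (hRpow : Tendsto (fun k : ℕ => R ^ k) atTop (nhds 0))
    (τ : Fin n → Fin n → ℝ)
    (T : ℝ) (hT : 0 < T)
    (e c x b y : Fin n → ℝ → ℝ)
    -- data regularity and periodicity
    (heint : ∀ i (s t : ℝ), IntervalIntegrable (e i) volume s t)
    (hcint : ∀ i (s t : ℝ), IntervalIntegrable (c i) volume s t)
    (hbint : ∀ i (s t : ℝ), IntervalIntegrable (b i) volume s t)
    -- network equations
    (hb : ∀ i t, b i t = c i t - y i t)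
    (hynn : ∀ i t, 0 ≤ y i t)
    (hdyn : ∀ i t, HasDerivAt (x i)
      (e i t - b i t + ∑ j, b j (t - τ j i) * R j i) t)
    -- `T`-periodicity of the solution
    (hxper : ∀ i t, x i (t + T) = x i t)
    (hbper : ∀ i t, b i (t + T) = b i t) :
    (∀ i, (1 / T) * ∫ t in (0:ℝ)..T, c i t
        = ((1 - R.transpose)⁻¹ *ᵥ (fun j => (1 / T) * ∫ t in (0:ℝ)..T, e j t)) i
          + (1 / T) * ∫ t in (0:ℝ)..T, y i t) ∧
    (∀ i, ((1 - R.transpose)⁻¹ *ᵥ (fun j => (1 / T) * ∫ t in (0:ℝ)..T, e j t)) i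
        ≤ (1 / T) * ∫ t in (0:ℝ)..T, c i t) := by
  have hdet : IsUnit (1 - Rᵀ).det := by
    rw [← det_transpose, transpose_sub, transpose_one, transpose_transpose,
      ← isUnit_iff_isUnit_det]
    exact Matrix.isUnit_one_sub_of_tendsto_pow_nhds_zero hRpow
  have : Invertible (1 - Rᵀ) := invertibleOfIsUnitDet _ hdet
  have hbal := one_sub_transpose_mulVec_integral_eq_of_periodic (fun i => heint i 0 T) hbint hdyn
    hxper hbper
  have hbavg : (1 - Rᵀ)⁻¹ *ᵥ (fun j => (1 / T) * ∫ t in (0:ℝ)..T, e j t)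
      = fun i => (1 / T) * ∫ t in (0:ℝ)..T, b i t :=
    inv_mulVec_eq_vec <| by
      change _ = (1 - Rᵀ) *ᵥ ((1 / T) • fun i => ∫ t in (0:ℝ)..T, b i t)
      rw [mulVec_smul, hbal]
      rfl
  have hcby : ∀ i, ∫ t in (0:ℝ)..T, c i t
      = (∫ t in (0:ℝ)..T, b i t) + ∫ t in (0:ℝ)..T, y i t := by
    intro i
    have hy : y i = fun t => c i t - b i t := funext fun t => by rw [hb]; ring
    rw [hy, intervalIntegral.integral_sub (hcint i 0 T) (hbint i 0 T)]
    ring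
  have hflow : ∀ i, (1 / T) * ∫ t in (0:ℝ)..T, c i t
      = ((1 - Rᵀ)⁻¹ *ᵥ (fun j => (1 / T) * ∫ t in (0:ℝ)..T, e j t)) i
        + (1 / T) * ∫ t in (0:ℝ)..T, y i t := fun i => by
    rw [hbavg, hcby, mul_add]
  refine ⟨hflow, fun i => (hflow i).symm ▸ le_add_of_nonneg_right ?_⟩
  exact mul_nonneg (by positivity) (intervalIntegral.integral_nonneg hT.le fun t _ => hynn i t)

/-- Flow-balance necessary condition for a `T`-periodic solution of the
network queueing dynamics: the per-period average service vector satisfies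
`c̄ = (I − Rᵀ)⁻¹ ē + ȳ`, and in particular `c̄ ≥ (I − Rᵀ)⁻¹ ē`. -/
theorem periodic_solution_flow_balance
    (n : ℕ) (R : Matrix (Fin n) (Fin n) ℝ)
    (hRnn : ∀ i j, 0 ≤ R i j)
    (hRpow : Tendsto (fun k : ℕ => R ^ k) atTop (nhds 0))
    (τ : Fin n → Fin n → ℝ) (hτ : ∀ i j, 0 < τ i j)
    (T : ℝ) (hT : 0 < T)
    (e c x b y : Fin n → ℝ → ℝ)
    -- data regularity and periodicity
    (heint : ∀ i (s t : ℝ), IntervalIntegrable (e i) volume s t)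
    (hcint : ∀ i (s t : ℝ), IntervalIntegrable (c i) volume s t)
    (hbint : ∀ i (s t : ℝ), IntervalIntegrable (b i) volume s t)
    (heper : ∀ i t, e i (t + T) = e i t)
    (hcper : ∀ i t, c i (t + T) = c i t)
    -- network equations
    (hb : ∀ i t, b i t = c i t - y i t)
    (hynn : ∀ i t, 0 ≤ y i t)
    (hxnn : ∀ i t, 0 ≤ x i t)
    (hcomp : ∀ i t, x i t * y i t = 0)
    (hdyn : ∀ i t, HasDerivAt (x i)
      (e i t - b i t + ∑ j, b j (t - τ j i) * R j i) t)
    -- `T`-periodicity of the solution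
    (hxper : ∀ i t, x i (t + T) = x i t)
    (hbper : ∀ i t, b i (t + T) = b i t) :
    (∀ i, (1 / T) * ∫ t in (0:ℝ)..T, c i t
        = ((1 - R.transpose)⁻¹ *ᵥ (fun j => (1 / T) * ∫ t in (0:ℝ)..T, e j t)) i
          + (1 / T) * ∫ t in (0:ℝ)..T, y i t) ∧
    (∀ i, ((1 - R.transpose)⁻¹ *ᵥ (fun j => (1 / T) * ∫ t in (0:ℝ)..T, e j t)) i
        ≤ (1 / T) * ∫ t in (0:ℝ)..T, c i t) :=
  periodic_solution_flow_balance_general n R hRpow τ T hT e c x b y heint hcint hbint hb hynn hdyn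
    hxper hbper
end

section
/- Consider the network queueing model with periodic arrivals and service rates of period T, routing matrix R with spectral radius < 1, bounded travel times, and stability condition c̄ > (I − Rᵀ)⁻¹ ē + ε·1 for some ε > 0. Then every trajectory x(t) of queue lengths is bounded: there exists M such that x(i)(t) ≤ M for all i and t. -/
set_option maxHeartbeats 1000000
open Set Filter MeasureTheory Matrix

lemma powEntryNonneg {n : ℕ} {R : Matrix (Fin n) (Fin n) ℝ} (h : ∀ i j, 0 ≤ R i j) :
    ∀ k i j, 0 ≤ (R ^ k) i j := by
  intro k
  induction k with
  | zero => intro i j; rw [pow_zero]; by_cases hij : i = j <;> simp [Matrix.one_apply, hij]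
  | succ k ih =>
    intro i j
    rw [pow_succ, Matrix.mul_apply]
    exact Finset.sum_nonneg fun l _ => mul_nonneg (ih i l) (h l j)

lemma oneSubUnit {n : ℕ} {A : Matrix (Fin n) (Fin n) ℝ}
    (hpow : Tendsto (fun k : ℕ => A ^ k) atTop (nhds 0)) :
    IsUnit (1 - A).det := by
  rw [isUnit_iff_ne_zero]
  intro hdet
  obtain ⟨v, hv, hv0⟩ := (Matrix.exists_mulVec_eq_zero_iff).2 hdet
  have hAv : A *ᵥ v = v := by
    have : (1 - A) *ᵥ v = v - A *ᵥ v := by rw [Matrix.sub_mulVec, Matrix.one_mulVec]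
    rw [this] at hv0
    linear_combination (norm := module) -hv0
  have hk : ∀ k : ℕ, (A ^ k) *ᵥ v = v := by
    intro k
    induction k with
    | zero => simp
    | succ k ih => rw [pow_succ', ← Matrix.mulVec_mulVec, ih, hAv]
  have hcont : Continuous fun M : Matrix (Fin n) (Fin n) ℝ => M *ᵥ v :=
    Continuous.matrix_mulVec continuous_id continuous_const
  have h2 : Tendsto (fun k : ℕ => (A ^ k) *ᵥ v) atTop (nhds ((0 : Matrix (Fin n) (Fin n) ℝ) *ᵥ v)) :=
    (hcont.tendsto 0).comp hpow
  rw [Matrix.zero_mulVec] at h2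
  simp only [hk] at h2
  exact hv (tendsto_nhds_unique tendsto_const_nhds h2)

lemma invEntryNonneg {n : ℕ} {A : Matrix (Fin n) (Fin n) ℝ}
    (hnn : ∀ k i j, 0 ≤ (A ^ k) i j)
    (hpow : Tendsto (fun k : ℕ => A ^ k) atTop (nhds 0)) :
    ∀ i j, 0 ≤ (1 - A)⁻¹ i j := by
  have hu := oneSubUnit hpow
  set Q := (1 - A)⁻¹ with hQ
  have hmul : (1 - A) * Q = 1 := Matrix.mul_nonsing_inv _ hu
  have hps : ∀ N : ℕ, (∑ k ∈ Finset.range N, A ^ k) = Q - A ^ N * Q := by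
    intro N
    have h1 : (∑ k ∈ Finset.range N, A ^ k) * (A - 1) = A ^ N - 1 := geom_sum_mul A N
    have h2 : (∑ k ∈ Finset.range N, A ^ k) * (1 - A) = 1 - A ^ N := by
      rw [mul_sub, mul_one] at h1 ⊢
      rw [← neg_sub ((∑ k ∈ Finset.range N, A ^ k) * A) (∑ k ∈ Finset.range N, A ^ k),
        ← neg_sub (A ^ N) (1 : Matrix (Fin n) (Fin n) ℝ), h1]
    calc (∑ k ∈ Finset.range N, A ^ k)
        = (∑ k ∈ Finset.range N, A ^ k) * ((1 - A) * Q) := by rw [hmul, mul_one]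
      _ = ((∑ k ∈ Finset.range N, A ^ k) * (1 - A)) * Q := by rw [mul_assoc]
      _ = (1 - A ^ N) * Q := by rw [h2]
      _ = Q - A ^ N * Q := by rw [sub_mul, one_mul]
  have hcont : Continuous fun M : Matrix (Fin n) (Fin n) ℝ => Q - M * Q :=
    continuous_const.sub (Continuous.matrix_mul continuous_id continuous_const)
  have htend : Tendsto (fun N : ℕ => ∑ k ∈ Finset.range N, A ^ k) atTop (nhds Q) := by
    have h2 : Tendsto (fun N : ℕ => Q - A ^ N * Q) atTop (nhds (Q - 0 * Q)) :=
      (hcont.tendsto 0).comp hpow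
    rw [Matrix.zero_mul, sub_zero] at h2
    rw [show (fun N : ℕ => ∑ k ∈ Finset.range N, A ^ k) = fun N => Q - A ^ N * Q from funext hps]
    exact h2
  intro i j
  have hentry : Tendsto (fun N : ℕ => (∑ k ∈ Finset.range N, A ^ k) i j) atTop (nhds (Q i j)) := by
    have hc : Continuous fun M : Matrix (Fin n) (Fin n) ℝ => M i j :=
      (continuous_apply j).comp (continuous_apply i)
    exact (hc.tendsto Q).comp htend
  refine ge_of_tendsto' hentry fun N => ?_
  rw [Matrix.sum_apply]
  exact Finset.sum_nonneg fun k _ => hnn k i j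

lemma periodicIntegralMul {f : ℝ → ℝ} {T : ℝ} (hper : Function.Periodic f T)
    (hint : ∀ a b : ℝ, IntervalIntegrable f volume a b) (s : ℝ) (k : ℕ) :
    ∫ r in s..(s + k * T), f r = k * ∫ r in (0:ℝ)..T, f r := by
  have h := hper.intervalIntegral_add_zsmul_eq (k : ℤ) s hint
  rw [hper.intervalIntegral_add_eq s 0] at h
  simpa [zsmul_eq_mul] using h

lemma periodicIntegralUpper {f : ℝ → ℝ} {T : ℝ} (hT : 0 < T) (hper : Function.Periodic f T)
    (hnn : ∀ t, 0 ≤ f t) (hint : ∀ a b : ℝ, IntervalIntegrable f volume a b)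
    {s t : ℝ} (hst : s ≤ t) :
    ∫ r in s..t, f r ≤ (t - s) * ((∫ r in (0:ℝ)..T, f r) / T) + ∫ r in (0:ℝ)..T, f r := by
  set F := ∫ r in (0:ℝ)..T, f r with hF
  have hFnn : 0 ≤ F := intervalIntegral.integral_nonneg hT.le fun u _ => hnn u
  set k := ⌈(t - s) / T⌉₊ with hk
  have h1 : t ≤ s + k * T := by
    have h0 : (t - s)/T ≤ (k : ℝ) := Nat.le_ceil _
    have := (div_le_iff₀ hT).mp h0
    linarith
  have h2 : (k : ℝ) ≤ (t - s)/T + 1 := by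
    have := Nat.ceil_lt_add_one (a := (t-s)/T) (div_nonneg (by linarith) hT.le)
    linarith
  have h3 : ∫ r in s..t, f r ≤ ∫ r in s..(s + k*T), f r :=
    intervalIntegral.integral_mono_interval le_rfl hst h1
      (Filter.Eventually.of_forall fun u => hnn u) (hint _ _)
  rw [periodicIntegralMul hper hint s k] at h3
  have h4 : (k:ℝ) * F ≤ ((t-s)/T + 1) * F := mul_le_mul_of_nonneg_right h2 hFnn
  calc ∫ r in s..t, f r ≤ (k:ℝ) * F := h3
    _ ≤ ((t-s)/T + 1) * F := h4
    _ = (t - s) * (F / T) + F := by field_simp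

lemma periodicIntegralLower {f : ℝ → ℝ} {T : ℝ} (hT : 0 < T) (hper : Function.Periodic f T)
    (hnn : ∀ t, 0 ≤ f t) (hint : ∀ a b : ℝ, IntervalIntegrable f volume a b)
    {s t : ℝ} (hst : s ≤ t) :
    (t - s) * ((∫ r in (0:ℝ)..T, f r) / T) - (∫ r in (0:ℝ)..T, f r) ≤ ∫ r in s..t, f r := by
  set F := ∫ r in (0:ℝ)..T, f r with hF
  have hFnn : 0 ≤ F := intervalIntegral.integral_nonneg hT.le fun u _ => hnn u
  set k := ⌊(t - s) / T⌋₊ with hk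
  have hts : 0 ≤ (t - s)/T := div_nonneg (by linarith) hT.le
  have h1 : s + k * T ≤ t := by
    have h0 : (k : ℝ) ≤ (t - s)/T := Nat.floor_le hts
    have := (le_div_iff₀ hT).mp h0
    linarith
  have h2 : (t - s)/T - 1 ≤ (k : ℝ) := by
    have := Nat.lt_floor_add_one ((t-s)/T)
    linarith
  have h3 : ∫ r in s..(s + k*T), f r ≤ ∫ r in s..t, f r :=
    intervalIntegral.integral_mono_interval le_rfl
      (by nlinarith [mul_nonneg (Nat.cast_nonneg k : (0:ℝ) ≤ (k:ℝ)) hT.le]) h1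
      (Filter.Eventually.of_forall fun u => hnn u) (hint _ _)
  rw [periodicIntegralMul hper hint s k] at h3
  have h4 : ((t-s)/T - 1) * F ≤ (k:ℝ) * F := mul_le_mul_of_nonneg_right h2 hFnn
  calc (t - s) * (F / T) - F = ((t-s)/T - 1) * F := by field_simp
    _ ≤ (k:ℝ) * F := h4
    _ ≤ ∫ r in s..t, f r := h3

/-- A solution of the network queueing dynamics (in integrated form). -/
def IsNetworkSolution (n : ℕ) (R : Matrix (Fin n) (Fin n) ℝ)
    (τ : Fin n → Fin n → ℝ) (e c : Fin n → ℝ → ℝ)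
    (x b : Fin n → ℝ → ℝ) : Prop :=
  (∀ i, Continuous (x i)) ∧
  (∀ i, Measurable (b i)) ∧
  (∀ i (s t : ℝ), IntervalIntegrable (b i) volume s t) ∧
  (∀ i t, 0 ≤ t →
    x i t = x i 0 + ∫ s in (0:ℝ)..t,
      (e i s - b i s + ∑ j, b j (s - τ j i) * R j i)) ∧
  (∀ i t, 0 ≤ t → 0 ≤ x i t) ∧
  (∀ i t, 0 ≤ b i t) ∧
  (∀ i t, 0 ≤ t → b i t ≤ c i t) ∧
  (∀ i t, 0 ≤ t → 0 < x i t → b i t = c i t)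

/-- Under the stability condition `c̄ > (I − Rᵀ)⁻¹ ē + ε·1`, every trajectory
of queue lengths in the stable network is bounded. -/
theorem network_queues_bounded
    (n : ℕ) (R : Matrix (Fin n) (Fin n) ℝ)
    (hRnn : ∀ i j, 0 ≤ R i j)
    (hRpow : Tendsto (fun k : ℕ => R ^ k) atTop (nhds 0))
    (τ : Fin n → Fin n → ℝ) (τmin τmax : ℝ)
    (hτmin : 0 < τmin) (hτ : ∀ i j, τmin ≤ τ i j ∧ τ i j ≤ τmax)
    (T : ℝ) (hT : 0 < T)
    (e c : Fin n → ℝ → ℝ)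
    (he : ∀ i, Continuous (e i)) (hc : ∀ i, Continuous (c i))
    (henn : ∀ i t, 0 ≤ e i t) (hcnn : ∀ i t, 0 ≤ c i t)
    (heper : ∀ i t, e i (t + T) = e i t)
    (hcper : ∀ i t, c i (t + T) = c i t)
    (ε : ℝ) (hε : 0 < ε)
    (hstab : ∀ i,
      ((1 - R.transpose)⁻¹ *ᵥ (fun j => (1 / T) * ∫ t in (0:ℝ)..T, e j t)) i + ε
        < (1 / T) * ∫ t in (0:ℝ)..T, c i t)
    (x b : Fin n → ℝ → ℝ)
    (hsol : IsNetworkSolution n R τ e c x b) :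
    ∃ M : ℝ, ∀ i t, 0 ≤ t → x i t ≤ M := by
  rcases Nat.eq_zero_or_pos n with hn0 | hn0
  · subst hn0
    exact ⟨0, fun i => i.elim0⟩
  obtain ⟨hxc, hbm, hbi, hdyn, hxnn, hbnn, hbc, hbeq⟩ := hsol
  -- abbreviations
  set A := R.transpose with hA
  set Q := (1 - A)⁻¹ with hQdef
  set ebar : Fin n → ℝ := fun j => (1 / T) * ∫ t in (0:ℝ)..T, e j t with hebar
  set cbar : Fin n → ℝ := fun j => (1 / T) * ∫ t in (0:ℝ)..T, c j t with hcbar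
  set Fe : Fin n → ℝ := fun j => ∫ t in (0:ℝ)..T, e j t with hFe
  set Fc : Fin n → ℝ := fun j => ∫ t in (0:ℝ)..T, c j t with hFc
  have hτnn : ∀ j i, 0 < τ j i := fun j i => lt_of_lt_of_le hτmin (hτ j i).1
  have hτmax : 0 < τmax :=
    lt_of_lt_of_le hτmin (le_trans (hτ ⟨0, hn0⟩ ⟨0, hn0⟩).1 (hτ ⟨0, hn0⟩ ⟨0, hn0⟩).2)
  -- matrix facts
  have hApow : Tendsto (fun k : ℕ => A ^ k) atTop (nhds 0) := by
    have hcont : Continuous fun M : Matrix (Fin n) (Fin n) ℝ => M.transpose :=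
      Continuous.matrix_transpose continuous_id
    have h2 : Tendsto (fun k : ℕ => (R ^ k).transpose) atTop
        (nhds ((0 : Matrix (Fin n) (Fin n) ℝ).transpose)) := (hcont.tendsto 0).comp hRpow
    rw [Matrix.transpose_zero] at h2
    simp only [Matrix.transpose_pow] at h2
    rw [hA]
    exact h2
  have hAnnpow : ∀ k i j, 0 ≤ (A ^ k) i j := by
    intro k i j
    rw [hA, ← Matrix.transpose_pow, Matrix.transpose_apply]
    exact powEntryNonneg hRnn k j i
  have hdet : IsUnit (1 - A).det := oneSubUnit hApow
  have hQnn : ∀ i j, 0 ≤ Q i j := invEntryNonneg hAnnpow hApow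
  have hQ1 : Q * (1 - A) = 1 := Matrix.nonsing_inv_mul _ hdet
  have hQ2 : (1 - A) * Q = 1 := Matrix.mul_nonsing_inv _ hdet
  have hAmv : ∀ (u : Fin n → ℝ) i, (A *ᵥ u) i = ∑ j, R j i * u j := by
    intro u i
    simp [Matrix.mulVec, dotProduct, hA, Matrix.transpose_apply]
  have hsolve : ∀ u w : Fin n → ℝ, (∀ i, u i - (∑ j, R j i * u j) ≤ w i) →
      ∀ i, u i ≤ (Q *ᵥ w) i := by
    intro u w h i
    have hu : u = Q *ᵥ ((1 - A) *ᵥ u) := by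
      rw [Matrix.mulVec_mulVec, hQ1, Matrix.one_mulVec]
    have hv : ∀ k, ((1 - A) *ᵥ u) k ≤ w k := by
      intro k
      rw [Matrix.sub_mulVec, Matrix.one_mulVec, Pi.sub_apply, hAmv]
      exact h k
    calc u i = ((Q *ᵥ ((1 - A) *ᵥ u))) i := by rw [← hu]
      _ ≤ (Q *ᵥ w) i := by
          simp only [Matrix.mulVec, dotProduct]
          exact Finset.sum_le_sum fun j _ => mul_le_mul_of_nonneg_left (hv j) (hQnn i j)
  set lam : Fin n → ℝ := Q *ᵥ ebar with hlam
  have hlami : ∀ i, lam i = ebar i + ∑ j, R j i * lam j := by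
    intro i
    have h1 : (1 - A) *ᵥ lam = ebar := by
      rw [hlam, Matrix.mulVec_mulVec, hQ2, Matrix.one_mulVec]
    have h2 := congrFun h1 i
    rw [Matrix.sub_mulVec, Matrix.one_mulVec, Pi.sub_apply, hAmv] at h2
    linarith
  have hFenn : ∀ i, 0 ≤ Fe i := fun i =>
    intervalIntegral.integral_nonneg hT.le fun u _ => henn i u
  have hFcnn : ∀ i, 0 ≤ Fc i := fun i =>
    intervalIntegral.integral_nonneg hT.le fun u _ => hcnn i u
  have hebarnn : ∀ i, 0 ≤ ebar i := fun i =>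
    mul_nonneg (by positivity) (hFenn i)
  have hcbarnn : ∀ i, 0 ≤ cbar i := fun i =>
    mul_nonneg (by positivity) (hFcnn i)
  have hlamnn : ∀ i, 0 ≤ lam i := by
    intro i
    rw [hlam]
    simp only [Matrix.mulVec, dotProduct]
    exact Finset.sum_nonneg fun j _ => mul_nonneg (hQnn i j) (hebarnn j)
  have hlamc : ∀ i, lam i ≤ cbar i := by
    intro i
    have h := hstab i
    have h2 : cbar i = (1 / T) * ∫ t in (0:ℝ)..T, c i t := congrFun hcbar i
    rw [h2]
    linarith
  have hFeT : ∀ i, Fe i / T = ebar i := by intro i; rw [hebar, hFe]; ring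
  have hFcT : ∀ i, Fc i / T = cbar i := by intro i; rw [hcbar, hFc]; ring
  -- integrability facts
  have hei : ∀ i (a b' : ℝ), IntervalIntegrable (e i) volume a b' :=
    fun i a b' => (he i).intervalIntegrable a b'
  have hci : ∀ i (a b' : ℝ), IntervalIntegrable (c i) volume a b' :=
    fun i a b' => (hc i).intervalIntegrable a b'
  have hbτint : ∀ j i (a b' : ℝ), IntervalIntegrable (fun r => b j (r - τ j i)) volume a b' := by
    intro j i a b'
    have := (hbi j (a - τ j i) (b' - τ j i)).comp_sub_right (τ j i)
    simpa using this
  -- cumulative processes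
  set Bq : Fin n → ℝ → ℝ := fun i t => ∫ s in (0:ℝ)..t, b i s with hBq
  set Ifun : Fin n → Fin n → ℝ → ℝ := fun j i t => ∫ s in (0:ℝ)..t, b j (s - τ j i) with hIfun
  -- balance equation
  have hbal : ∀ i t, 0 ≤ t →
      x i t = x i 0 + (∫ s in (0:ℝ)..t, e i s) - Bq i t + ∑ j, R j i * Ifun j i t := by
    intro i t ht
    rw [hdyn i t ht]
    have h1 : IntervalIntegrable (fun s => e i s - b i s) volume 0 t :=
      (hei i 0 t).sub (hbi i 0 t)
    have h2 : IntervalIntegrable (fun s => ∑ j, b j (s - τ j i) * R j i) volume 0 t := by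
      have h2a : IntervalIntegrable (∑ j, fun s => b j (s - τ j i) * R j i) volume 0 t :=
        IntervalIntegrable.sum _ fun j _ => (hbτint j i 0 t).mul_const _
      have h2b : (fun s => ∑ j, b j (s - τ j i) * R j i)
          = ∑ j, fun s => b j (s - τ j i) * R j i := by
        funext s; rw [Finset.sum_apply]
      rw [h2b]
      exact h2a
    rw [intervalIntegral.integral_add h1 h2,
      intervalIntegral.integral_sub (hei i 0 t) (hbi i 0 t),
      intervalIntegral.integral_finset_sum fun j _ => (hbτint j i 0 t).mul_const _]
    simp only [intervalIntegral.integral_mul_const]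
    rw [Finset.sum_congr rfl fun j _ => mul_comm (Ifun j i t) (R j i)]
    ring
  -- basic bounds
  have hBnn : ∀ i t, 0 ≤ t → 0 ≤ Bq i t := fun i t ht =>
    intervalIntegral.integral_nonneg ht fun u _ => hbnn i u
  have heub : ∀ i t, 0 ≤ t → (∫ s in (0:ℝ)..t, e i s) ≤ t * ebar i + Fe i := by
    intro i t ht
    have := periodicIntegralUpper hT (heper i) (henn i) (hei i) (s := 0) (t := t) ht
    rw [hFeT i] at this
    simpa using this
  have helb : ∀ i t, 0 ≤ t → t * ebar i - Fe i ≤ ∫ s in (0:ℝ)..t, e i s := by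
    intro i t ht
    have := periodicIntegralLower hT (heper i) (henn i) (hei i) (s := 0) (t := t) ht
    rw [hFeT i] at this
    simpa using this
  have hcub : ∀ i (s t : ℝ), s ≤ t → (∫ r in s..t, c i r) ≤ (t - s) * cbar i + Fc i := by
    intro i s t hst
    have := periodicIntegralUpper hT (hcper i) (hcnn i) (hci i) hst
    rw [hFcT i] at this
    exact this
  have hclb : ∀ i (s t : ℝ), s ≤ t → (t - s) * cbar i - Fc i ≤ ∫ r in s..t, c i r := by
    intro i s t hst
    have := periodicIntegralLower hT (hcper i) (hcnn i) (hci i) hst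
    rw [hFcT i] at this
    exact this
  -- in-transit bounds
  set K : Fin n → ℝ := fun j => ∫ s in (-τmax)..(0:ℝ), b j s with hK
  have hIint : ∀ j i t, Ifun j i t = ∫ s in (-(τ j i))..(t - τ j i), b j s := by
    intro j i t
    simp only [hIfun]
    rw [intervalIntegral.integral_comp_sub_right (fun s => b j s) (τ j i)]
    norm_num
  have hIub : ∀ j i t, 0 ≤ t → Ifun j i t ≤ Bq j t + K j := by
    intro j i t ht
    rw [hIint]
    have h1 : (∫ s in (-(τ j i))..(t - τ j i), b j s) ≤ ∫ s in (-τmax)..t, b j s :=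
      intervalIntegral.integral_mono_interval (by linarith [(hτ j i).2])
        (by linarith [(hτnn j i).le]) (by linarith [(hτnn j i).le])
        (Filter.Eventually.of_forall fun u => hbnn j u) (hbi j _ _)
    have h2 : (∫ s in (-τmax)..t, b j s) = K j + Bq j t := by
      simp only [hK, hBq]
      exact (intervalIntegral.integral_add_adjacent_intervals (hbi j (-τmax) 0) (hbi j 0 t)).symm
    linarith
  set Kc : Fin n → ℝ := fun j => τmax * cbar j + Fc j with hKc
  have hKcnn : ∀ j, 0 ≤ Kc j := fun j =>
    add_nonneg (mul_nonneg hτmax.le (hcbarnn j)) (hFcnn j)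
  have hIlb : ∀ j i t, 0 ≤ t → Bq j t - Kc j ≤ Ifun j i t := by
    intro j i t ht
    rw [hIint]
    rcases le_or_gt (τ j i) t with hcase | hcase
    · -- t ≥ τ j i
      have h1 : Bq j (t - τ j i) ≤ ∫ s in (-(τ j i))..(t - τ j i), b j s := by
        simp only [hBq]
        exact intervalIntegral.integral_mono_interval (by linarith [(hτnn j i).le])
          (by linarith) le_rfl
          (Filter.Eventually.of_forall fun u => hbnn j u) (hbi j _ _)
      have h2 : Bq j t - Bq j (t - τ j i) = ∫ s in (t - τ j i)..t, b j s := by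
        simp only [hBq]
        rw [← intervalIntegral.integral_add_adjacent_intervals (hbi j 0 (t - τ j i)) (hbi j _ t)]
        ring
      have h3 : (∫ s in (t - τ j i)..t, b j s) ≤ ∫ s in (t - τ j i)..t, c j s := by
        apply intervalIntegral.integral_mono_on (by linarith [(hτnn j i).le])
          (hbi j _ _) (hci j _ _)
        intro u hu
        exact hbc j u (by linarith [hu.1])
      have h4 : (∫ s in (t - τ j i)..t, c j s) ≤ τ j i * cbar j + Fc j :=
        (by simpa using hcub j (t - τ j i) t (by linarith [(hτnn j i).le]))
      have h5 : τ j i * cbar j ≤ τmax * cbar j :=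
        mul_le_mul_of_nonneg_right (hτ j i).2 (hcbarnn j)
      simp only [hKc]
      linarith
    · -- t < τ j i
      have h1 : (0:ℝ) ≤ ∫ s in (-(τ j i))..(t - τ j i), b j s :=
        intervalIntegral.integral_nonneg (by linarith) fun u _ => hbnn j u
      have h2 : Bq j t ≤ ∫ s in (0:ℝ)..t, c j s := by
        simp only [hBq]
        exact intervalIntegral.integral_mono_on ht (hbi j 0 t) (hci j 0 t)
          fun u hu => hbc j u hu.1
      have h3 : (∫ s in (0:ℝ)..t, c j s) ≤ t * cbar j + Fc j := by
        simpa using hcub j 0 t ht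
      have h4 : t * cbar j ≤ τmax * cbar j :=
        mul_le_mul_of_nonneg_right (by linarith [(hτ j i).2]) (hcbarnn j)
      simp only [hKc]
      linarith
  -- F1 : upper bound on cumulative service
  set w1 : Fin n → ℝ := fun i => x i 0 + Fe i + ∑ j, R j i * K j with hw1
  set C1 : Fin n → ℝ := Q *ᵥ w1 with hC1
  have hBub : ∀ t, 0 ≤ t → ∀ i, Bq i t ≤ t * lam i + C1 i := by
    intro t ht i
    have key : ∀ k, Bq k t - (∑ j, R j k * Bq j t) ≤ w1 k + t * ebar k := by
      intro k
      have hb := hbal k t ht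
      have hx0 : 0 ≤ x k t := hxnn k t ht
      have hsum : (∑ j, R j k * Ifun j k t) ≤ ∑ j, R j k * (Bq j t + K j) :=
        Finset.sum_le_sum fun j _ =>
          mul_le_mul_of_nonneg_left (hIub j k t ht) (hRnn j k)
      have hsplit : (∑ j, R j k * (Bq j t + K j))
          = (∑ j, R j k * Bq j t) + ∑ j, R j k * K j := by
        rw [← Finset.sum_add_distrib]
        exact Finset.sum_congr rfl fun j _ => by ring
      have hel := heub k t ht
      simp only [hw1]
      have : Bq k t = x k 0 + (∫ s in (0:ℝ)..t, e k s) - x k t + ∑ j, R j k * Ifun j k t := by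
        linarith [hb]
      rw [this]
      rw [hsplit] at hsum
      linarith
    have h1 := hsolve (fun k => Bq k t) (fun k => w1 k + t * ebar k) key i
    have h2 : (Q *ᵥ fun k => w1 k + t * ebar k) i = C1 i + t * lam i := by
      have hfn : (fun k => w1 k + t * ebar k) = w1 + t • ebar := by
        funext k; simp [smul_eq_mul]
      rw [hfn, Matrix.mulVec_add, Matrix.mulVec_smul, Pi.add_apply, Pi.smul_apply,
        smul_eq_mul, hC1, hlam]
    rw [h2] at h1
    linarith
  -- F2 : x in terms of the service deficit
  set C2 : Fin n → ℝ := fun i => x i 0 + Fe i + ∑ j, R j i * (K j + C1 j) with hC2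
  have hxD : ∀ t, 0 ≤ t → ∀ i, x i t ≤ C2 i + (t * lam i - Bq i t) := by
    intro t ht i
    have hb := hbal i t ht
    have hsum : (∑ j, R j i * Ifun j i t) ≤ ∑ j, R j i * (t * lam j + C1 j + K j) :=
      Finset.sum_le_sum fun j _ => mul_le_mul_of_nonneg_left
        (le_trans (hIub j i t ht) (by linarith [hBub t ht j])) (hRnn j i)
    have hsplit : (∑ j, R j i * (t * lam j + C1 j + K j))
        = t * (∑ j, R j i * lam j) + ∑ j, R j i * (K j + C1 j) := by
      rw [Finset.mul_sum, ← Finset.sum_add_distrib]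
      exact Finset.sum_congr rfl fun j _ => by ring
    have hel := heub i t ht
    have hlamid := hlami i
    simp only [hC2]
    nlinarith [hsum, hsplit]
  -- F3 : the service deficit is bounded
  set C0 : Fin n → ℝ := fun i => Fe i + ∑ j, R j i * Kc j with hC0
  have hC0nn : ∀ i, 0 ≤ C0 i := fun i =>
    add_nonneg (hFenn i) (Finset.sum_nonneg fun j _ => mul_nonneg (hRnn j i) (hKcnn j))
  set C3 : Fin n → ℝ := fun i => C0 i + Fc i with hC3
  set Dmax : Fin n → ℝ := Q *ᵥ C3 with hDmax
  have hD : ∀ t, 0 ≤ t → ∀ i, t * lam i - Bq i t ≤ Dmax i := by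
    intro t1 ht1 i0
    set S : Fin n → ℝ := fun i => sSup ((fun s => s * lam i - Bq i s) '' Icc 0 t1) with hS
    have hbdd : ∀ i, BddAbove ((fun s => s * lam i - Bq i s) '' Icc 0 t1) := by
      intro i
      refine ⟨t1 * lam i, ?_⟩
      rintro _ ⟨s, hs, rfl⟩
      have h1 := hBnn i s hs.1
      have h2 : s * lam i ≤ t1 * lam i := mul_le_mul_of_nonneg_right hs.2 (hlamnn i)
      show s * lam i - Bq i s ≤ t1 * lam i
      linarith
    have hne : ∀ i, ((fun s => s * lam i - Bq i s) '' Icc 0 t1).Nonempty :=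
      fun i => ⟨_, ⟨0, ⟨le_rfl, ht1⟩, rfl⟩⟩
    have hSmem : ∀ i s, s ∈ Icc 0 t1 → s * lam i - Bq i s ≤ S i :=
      fun i s hs => le_csSup (hbdd i) ⟨s, hs, rfl⟩
    have hS0 : ∀ i, 0 ≤ S i := by
      intro i
      have := hSmem i 0 ⟨le_rfl, ht1⟩
      simpa [hBq, intervalIntegral.integral_same] using this
    -- deficit bound at empty times
    have hempty : ∀ i t', t' ∈ Icc 0 t1 → x i t' = 0 →
        t' * lam i - Bq i t' ≤ C0 i + ∑ j, R j i * S j := by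
      intro i t' ht' hx0
      have hb := hbal i t' ht'.1
      rw [hx0] at hb
      have hx00 : 0 ≤ x i 0 := hxnn i 0 le_rfl
      have hel := helb i t' ht'.1
      have hsum : (∑ j, R j i * (Bq j t' - Kc j)) ≤ ∑ j, R j i * Ifun j i t' :=
        Finset.sum_le_sum fun j _ =>
          mul_le_mul_of_nonneg_left (hIlb j i t' ht'.1) (hRnn j i)
      -- Bq i t' ≥ t' * ebar i - Fe i + ∑ j R j i (Bq j t' - Kc j)
      have hBlb : t' * ebar i - Fe i + (∑ j, R j i * (Bq j t' - Kc j)) ≤ Bq i t' := by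
        linarith
      have hsplit : (∑ j, R j i * (Bq j t' - Kc j))
          = (∑ j, R j i * Bq j t') - ∑ j, R j i * Kc j := by
        rw [← Finset.sum_sub_distrib]
        exact Finset.sum_congr rfl fun j _ => by ring
      have hlamid := hlami i
      have hDsum : (∑ j, R j i * (t' * lam j - Bq j t')) ≤ ∑ j, R j i * S j :=
        Finset.sum_le_sum fun j _ =>
          mul_le_mul_of_nonneg_left (hSmem j t' ⟨ht'.1, ht'.2⟩) (hRnn j i)
      have hDsplit : (∑ j, R j i * (t' * lam j - Bq j t'))
          = t' * (∑ j, R j i * lam j) - ∑ j, R j i * Bq j t' := by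
        rw [Finset.mul_sum, ← Finset.sum_sub_distrib]
        exact Finset.sum_congr rfl fun j _ => by ring
      simp only [hC0]
      have hmul : t' * lam i = t' * ebar i + t' * (∑ j, R j i * lam j) := by
        rw [hlamid]; ring
      linarith [hBlb, hsplit, hDsum, hDsplit, hmul]
    -- busy run bound
    have hrun : ∀ i t0 t', 0 ≤ t0 → t0 ≤ t' →
        (∀ r, t0 < r → r ≤ t' → 0 < x i r) →
        t' * lam i - Bq i t' ≤ (t0 * lam i - Bq i t0) + Fc i := by
      intro i t0 t' ht0 ht0t' hpos
      have hBdiff : Bq i t' - Bq i t0 = ∫ s in t0..t', b i s := by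
        simp only [hBq]
        rw [← intervalIntegral.integral_add_adjacent_intervals (hbi i 0 t0) (hbi i t0 t')]
        ring
      have hbc' : (∫ s in t0..t', b i s) = ∫ s in t0..t', c i s := by
        apply intervalIntegral.integral_congr_ae
        apply Filter.Eventually.of_forall
        intro r hr
        rw [Set.uIoc_of_le ht0t'] at hr
        exact hbeq i r (by linarith [hr.1]) (hpos r hr.1 hr.2)
      have hcl := hclb i t0 t' ht0t'
      have hlc : (t' - t0) * lam i ≤ (t' - t0) * cbar i :=
        mul_le_mul_of_nonneg_left (hlamc i) (by linarith : (0:ℝ) ≤ t' - t0)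
      have hexp : (t' - t0) * lam i = t' * lam i - t0 * lam i := by ring
      have hexp2 : (t' - t0) * cbar i - Fc i ≤ Bq i t' - Bq i t0 := by
        rw [hBdiff, hbc']; exact hcl
      linarith [hlc, hexp, hexp2]
    -- key bound for every time in the horizon
    have hkey : ∀ i s, s ∈ Icc 0 t1 → s * lam i - Bq i s ≤ C3 i + ∑ j, R j i * S j := by
      intro i s hs
      have hSsumnn : 0 ≤ ∑ j, R j i * S j :=
        Finset.sum_nonneg fun j _ => mul_nonneg (hRnn j i) (hS0 j)
      by_cases hE : ∃ r, r ∈ Icc 0 s ∧ x i r = 0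
      · -- there is an empty time; take the last one
        set E := {r | r ∈ Icc 0 s ∧ x i r = 0} with hEdef
        have hEclosed : IsClosed E := by
          have : E = Icc 0 s ∩ (x i) ⁻¹' {0} := by
            ext r; simp [hEdef]
          rw [this]
          exact isClosed_Icc.inter (isClosed_singleton.preimage (hxc i))
        have hEne : E.Nonempty := hE
        have hEbdd : BddAbove E := ⟨s, fun r hr => hr.1.2⟩
        set t0 := sSup E with ht0def
        have ht0mem : t0 ∈ E := hEclosed.csSup_mem hEne hEbdd
        have ht00 : 0 ≤ t0 := ht0mem.1.1
        have ht0s : t0 ≤ s := ht0mem.1.2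
        have hpos : ∀ r, t0 < r → r ≤ s → 0 < x i r := by
          intro r hr1 hr2
          have hr0 : 0 ≤ r := le_trans ht00 hr1.le
          rcases lt_or_eq_of_le (hxnn i r hr0) with h | h
          · exact h
          · exfalso
            have : r ∈ E := ⟨⟨hr0, hr2⟩, h.symm⟩
            exact absurd (le_csSup hEbdd this) (not_le.mpr hr1)
        have h1 := hrun i t0 s ht00 ht0s hpos
        have h2 := hempty i t0 ⟨ht00, le_trans ht0s hs.2⟩ ht0mem.2
        simp only [hC3]
        linarith
      · -- the queue is never empty on [0, s]
        push_neg at hE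
        have hpos : ∀ r, 0 < r → r ≤ s → 0 < x i r := by
          intro r hr1 hr2
          rcases lt_or_eq_of_le (hxnn i r hr1.le) with h | h
          · exact h
          · exact absurd h.symm (hE r ⟨hr1.le, hr2⟩)
        have h1 := hrun i 0 s le_rfl hs.1 hpos
        have hB0 : Bq i 0 = 0 := by simp only [hBq]; simp
        simp only [hC3]
        rw [hB0] at h1
        have := hC0nn i
        linarith
    have hSle : ∀ i, S i ≤ C3 i + ∑ j, R j i * S j := by
      intro i
      apply csSup_le (hne i)
      rintro _ ⟨s, hs, rfl⟩
      exact hkey i s hs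
    have hSQ : ∀ i, S i ≤ (Q *ᵥ C3) i :=
      hsolve S C3 fun i => by linarith [hSle i]
    have := hSmem i0 t1 ⟨ht1, le_rfl⟩
    rw [hDmax]
    linarith [hSQ i0]
  -- conclusion
  refine ⟨∑ i, (|C2 i| + |Dmax i|), ?_⟩
  intro i t ht
  have h1 := hxD t ht i
  have h2 := hD t ht i
  have h3 : x i t ≤ |C2 i| + |Dmax i| := by
    have := abs_nonneg (C2 i)
    have := le_abs_self (C2 i)
    have := le_abs_self (Dmax i)
    linarith
  have h4 : (|C2 i| + |Dmax i|) ≤ ∑ k, (|C2 k| + |Dmax k|) :=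
    Finset.single_le_sum (f := fun k => |C2 k| + |Dmax k|)
      (fun k _ => add_nonneg (abs_nonneg _) (abs_nonneg _)) (Finset.mem_univ i)
  linarith
end

section
/- Under the stability condition c̄ > (I−Rᵀ)⁻¹ē + ε·1 (ε > 0) and boundedness of queue lengths, the cumulative unused service diverges: for every queue i, ∫₀^t y(i)(s) ds → ∞ as t → ∞. -/
/-!
Nonnegativity of the queue lengths in the integrated dynamics gives, for the cumulative service
`B(t) = ∫₀ᵗ b`, the vector inequality `B(t) ≤ Rᵀ B(t) + x(0) + E(t) + d`, where `E(t) = ∫₀ᵗ e` and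
`d` collects the service already in transit at time `0`. Since `Rᵏ → 0`, the matrix
`(1 - Rᵀ)⁻¹ = ∑ₖ (Rᵀ)ᵏ` is entrywise nonnegative, so `B(t) ≤ (1 - Rᵀ)⁻¹ (x(0) + E(t) + d)`.
For a continuous `T`-periodic rate, `∫₀ᵗ f - t f̄` is continuous and `T`-periodic, hence bounded;
so `B(t)` grows at most at rate `(1 - Rᵀ)⁻¹ ē` while `∫₀ᵗ c` grows at rate `c̄`, and the
stability condition makes `∫₀ᵗ (c - b) ≥ ε t - K`.
-/

open Set Filter MeasureTheory Matrix

namespace Matrix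

variable {ι : Type*} [Fintype ι] [DecidableEq ι]

theorem isUnit_one_sub_of_tendsto_pow {K : Type*} [Field K] [TopologicalSpace K]
    [IsTopologicalRing K] [T1Space K] {A : Matrix ι ι K}
    (hA : Tendsto (fun k : ℕ => A ^ k) atTop (nhds 0)) : IsUnit (1 - A) := by
  have hdet : Tendsto (fun k : ℕ => (1 - A ^ k).det) atTop (nhds 1) := by
    have hcont : Continuous fun B : Matrix ι ι K => (1 - B).det := by fun_prop
    simpa [Function.comp_def] using (hcont.tendsto 0).comp hA
  obtain ⟨m, hm⟩ := (hdet.eventually_ne one_ne_zero).exists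
  rw [isUnit_iff_isUnit_det, isUnit_iff_ne_zero]
  intro h
  rw [← mul_neg_geom_sum, det_mul, h, zero_mul] at hm
  exact hm rfl

theorem one_sub_inv_apply_nonneg {A : Matrix ι ι ℝ} (hA : ∀ i j, 0 ≤ A i j)
    (hpow : Tendsto (fun k : ℕ => A ^ k) atTop (nhds 0)) (i j : ι) :
    0 ≤ (1 - A)⁻¹ i j := by
  have hdet := (isUnit_iff_isUnit_det _).mp (isUnit_one_sub_of_tendsto_pow hpow)
  have hpartial : ∀ m, ∑ k ∈ Finset.range m, A ^ k = (1 - A)⁻¹ * (1 - A ^ m) := fun m => by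
    rw [← mul_neg_geom_sum, ← mul_assoc, nonsing_inv_mul _ hdet, one_mul]
  have hneumann :
      Tendsto (fun m => ∑ k ∈ Finset.range m, A ^ k) atTop (nhds (1 - A)⁻¹) := by
    simp only [hpartial]
    have hcont : Continuous fun B : Matrix ι ι ℝ => (1 - A)⁻¹ * (1 - B) := by fun_prop
    simpa [Function.comp_def] using (hcont.tendsto 0).comp hpow
  refine ge_of_tendsto' (((continuous_id.matrix_elem i j).tendsto _).comp hneumann) fun m => ?_
  simp only [Function.comp_apply, id, sum_apply]
  exact Finset.sum_nonneg fun k _ => pow_apply_nonneg hA k i j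

theorem le_one_sub_inv_mulVec {A : Matrix ι ι ℝ} (hA : ∀ i j, 0 ≤ A i j)
    (hpow : Tendsto (fun k : ℕ => A ^ k) atTop (nhds 0)) {v w : ι → ℝ}
    (hvw : v ≤ A *ᵥ v + w) : v ≤ (1 - A)⁻¹ *ᵥ w := by
  have hdet := (isUnit_iff_isUnit_det _).mp (isUnit_one_sub_of_tendsto_pow hpow)
  have hle : (1 - A) *ᵥ v ≤ w := fun i => by
    have := hvw i
    simp only [sub_mulVec, one_mulVec, Pi.sub_apply, Pi.add_apply] at this ⊢
    linarith
  calc v = (1 - A)⁻¹ *ᵥ ((1 - A) *ᵥ v) := by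
        rw [mulVec_mulVec, nonsing_inv_mul _ hdet, one_mulVec]
    _ ≤ (1 - A)⁻¹ *ᵥ w := fun i => Finset.sum_le_sum fun j _ =>
        mul_le_mul_of_nonneg_left (hle j) (one_sub_inv_apply_nonneg hA hpow i j)

end Matrix

theorem Function.Periodic.exists_abs_intervalIntegral_sub_mul_le {f : ℝ → ℝ} {T : ℝ}
    (hf : Function.Periodic f T) (hT : T ≠ 0) (hfc : Continuous f) :
    ∃ C, ∀ t, |(∫ s in (0:ℝ)..t, f s) - t * ((1 / T) * ∫ s in (0:ℝ)..T, f s)| ≤ C := by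
  set g := fun t => (∫ s in (0:ℝ)..t, f s) - t * ((1 / T) * ∫ s in (0:ℝ)..T, f s)
  have hg : Function.Periodic g T := fun t => by
    simp only [g, hf.intervalIntegral_add_eq_add 0 t hfc.intervalIntegrable, zero_add]
    field_simp
    ring
  have hgc : Continuous g :=
    (intervalIntegral.continuous_primitive hfc.intervalIntegrable 0).sub (by fun_prop)
  obtain ⟨C, hC⟩ := isBounded_iff_forall_norm_le.mp (hg.isBounded_of_continuous hT hgc)
  exact ⟨C, fun t => hC _ (mem_range_self t)⟩

theorem intervalIntegral_comp_sub_le_add {b : ℝ → ℝ}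
    (hb : ∀ s t, IntervalIntegrable b volume s t) (hb0 : ∀ s, 0 ≤ b s) {τ : ℝ} (hτ : 0 ≤ τ)
    (t : ℝ) : ∫ s in (0:ℝ)..t, b (s - τ) ≤ (∫ s in -τ..0, b s) + ∫ s in (0:ℝ)..t, b s := by
  have htail : 0 ≤ ∫ s in t - τ..t, b s :=
    intervalIntegral.integral_nonneg (by linarith) fun s _ => hb0 s
  have hshifted :=
    intervalIntegral.integral_add_adjacent_intervals (hb (-τ) (t - τ)) (hb (t - τ) t)
  have hunshifted := intervalIntegral.integral_add_adjacent_intervals (hb (-τ) 0) (hb 0 t)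
  rw [intervalIntegral.integral_comp_sub_right, zero_sub]
  linarith

namespace IsNetworkSolution

variable {n : ℕ} {R : Matrix (Fin n) (Fin n) ℝ} {τ : Fin n → Fin n → ℝ} {e c x b : Fin n → ℝ → ℝ}

theorem cumulative_service_le (hsol : IsNetworkSolution n R τ e c x b)
    (hR : ∀ i j, 0 ≤ R i j) (hτ : ∀ i j, 0 ≤ τ i j)
    (he : ∀ i s t, IntervalIntegrable (e i) volume s t) {t : ℝ} (ht : 0 ≤ t) :
    (fun i => ∫ s in (0:ℝ)..t, b i s) ≤ Rᵀ *ᵥ (fun i => ∫ s in (0:ℝ)..t, b i s) +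
      fun i => x i 0 + (∫ s in (0:ℝ)..t, e i s) + ∑ j, (∫ s in -τ j i..0, b j s) * R j i := by
  obtain ⟨-, -, hb, hdyn, hx, hb0, -⟩ := hsol
  intro i
  have hshift : ∀ j, IntervalIntegrable (fun s => b j (s - τ j i) * R j i) volume 0 t :=
    fun j => by simpa using ((hb j (-τ j i) (t - τ j i)).comp_sub_right (τ j i)).mul_const (R j i)
  have hsplit : ∫ s in (0:ℝ)..t, (e i s - b i s + ∑ j, b j (s - τ j i) * R j i) =
      (∫ s in (0:ℝ)..t, e i s) - (∫ s in (0:ℝ)..t, b i s)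
        + ∑ j, (∫ s in (0:ℝ)..t, b j (s - τ j i)) * R j i := by
    have hsum := IntervalIntegrable.sum Finset.univ fun j _ => hshift j
    simp only [Finset.sum_fn] at hsum
    rw [intervalIntegral.integral_add ((he i 0 t).sub (hb i 0 t)) hsum,
      intervalIntegral.integral_sub (he i 0 t) (hb i 0 t),
      intervalIntegral.integral_finsetSum fun j _ => hshift j]
    simp only [intervalIntegral.integral_mul_const]
  have hdelay : ∑ j, (∫ s in (0:ℝ)..t, b j (s - τ j i)) * R j i ≤
      ∑ j, ((∫ s in -τ j i..0, b j s) + ∫ s in (0:ℝ)..t, b j s) * R j i :=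
    Finset.sum_le_sum fun j _ => mul_le_mul_of_nonneg_right
      (intervalIntegral_comp_sub_le_add (hb j) (hb0 j) (hτ j i) t) (hR j i)
  have hxt := hx i t ht
  rw [hdyn i t ht, hsplit] at hxt
  simp only [Pi.add_apply, mulVec, dotProduct, transpose_apply, add_mul, Finset.sum_add_distrib,
    mul_comm (R _ i)] at hdelay ⊢
  linarith

theorem exists_cumulative_service_le (hsol : IsNetworkSolution n R τ e c x b)
    (hR : ∀ i j, 0 ≤ R i j) (hRpow : Tendsto (fun k : ℕ => R ^ k) atTop (nhds 0))
    (hτ : ∀ i j, 0 ≤ τ i j) {T : ℝ} (hT : T ≠ 0) (he : ∀ i, Continuous (e i))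
    (heper : ∀ i, Function.Periodic (e i) T) :
    ∃ D : Fin n → ℝ, ∀ t, 0 ≤ t → (fun i => ∫ s in (0:ℝ)..t, b i s) ≤
      D + t • ((1 - Rᵀ)⁻¹ *ᵥ fun j => (1 / T) * ∫ s in (0:ℝ)..T, e j s) := by
  choose C hC using fun i => (heper i).exists_abs_intervalIntegral_sub_mul_le hT (he i)
  have hRTpow : Tendsto (fun k : ℕ => Rᵀ ^ k) atTop (nhds 0) := by
    simpa [Function.comp_def, transpose_pow] using
      (continuous_id.matrix_transpose.tendsto 0).comp hRpow
  refine ⟨(1 - Rᵀ)⁻¹ *ᵥ fun i => x i 0 + C i + ∑ j, (∫ s in -τ j i..0, b j s) * R j i,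
    fun t ht => ?_⟩
  rw [← mulVec_smul, ← mulVec_add]
  refine le_one_sub_inv_mulVec (fun i j => hR j i) hRTpow
    ((hsol.cumulative_service_le hR hτ (fun i => (he i).intervalIntegrable) ht).trans
      (add_le_add_right (fun i => ?_) _))
  have := (abs_le.mp (hC i t)).2
  simp only [Pi.add_apply, Pi.smul_apply, smul_eq_mul]
  linarith

end IsNetworkSolution

theorem cumulative_unused_service_diverges_general
    (n : ℕ) (R : Matrix (Fin n) (Fin n) ℝ)
    (hRnn : ∀ i j, 0 ≤ R i j)
    (hRpow : Tendsto (fun k : ℕ => R ^ k) atTop (nhds 0))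
    (τ : Fin n → Fin n → ℝ) (τmin τmax : ℝ)
    (hτmin : 0 < τmin) (hτ : ∀ i j, τmin ≤ τ i j ∧ τ i j ≤ τmax)
    (T : ℝ) (hT : 0 < T)
    (e c : Fin n → ℝ → ℝ)
    (he : ∀ i, Continuous (e i)) (hc : ∀ i, Continuous (c i))
    (heper : ∀ i t, e i (t + T) = e i t)
    (hcper : ∀ i t, c i (t + T) = c i t)
    (ε : ℝ) (hε : 0 < ε)
    (hstab : ∀ i,
      ((1 - R.transpose)⁻¹ *ᵥ (fun j => (1 / T) * ∫ t in (0:ℝ)..T, e j t)) i + ε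
        < (1 / T) * ∫ t in (0:ℝ)..T, c i t)
    (x b : Fin n → ℝ → ℝ)
    (hsol : IsNetworkSolution n R τ e c x b) :
    ∀ i, Tendsto (fun t : ℝ => ∫ s in (0:ℝ)..t, (c i s - b i s)) atTop atTop := by
  intro i
  have hτ0 : ∀ i j, 0 ≤ τ i j := fun i j => hτmin.le.trans (hτ i j).1
  obtain ⟨D, hD⟩ := hsol.exists_cumulative_service_le hRnn hRpow hτ0 hT.ne' he heper
  obtain ⟨C, hC⟩ :=
    Function.Periodic.exists_abs_intervalIntegral_sub_mul_le (hcper i) hT.ne' (hc i)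
  have hlinear : Tendsto (fun t : ℝ => ε * t - (C + D i)) atTop atTop :=
    tendsto_atTop_add_const_right _ _ (tendsto_id.const_mul_atTop hε)
  refine tendsto_atTop_mono' atTop ?_ hlinear
  filter_upwards [eventually_ge_atTop 0] with t ht
  have hservice := hD t ht i
  have hcapacity := (abs_le.mp (hC t)).1
  have hrates := mul_le_mul_of_nonneg_left (hstab i).le ht
  simp only [Pi.add_apply, Pi.smul_apply, smul_eq_mul] at hservice
  obtain ⟨-, -, hb, -⟩ := hsol
  rw [intervalIntegral.integral_sub ((hc i).intervalIntegrable 0 t) (hb i 0 t)]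
  linarith

/-- Under the stability condition and boundedness of queue lengths, the
cumulative unused service `∫₀ᵗ y(i)(s) ds = ∫₀ᵗ (c(i) − b(i))` diverges at
every queue. -/
theorem cumulative_unused_service_diverges
    (n : ℕ) (R : Matrix (Fin n) (Fin n) ℝ)
    (hRnn : ∀ i j, 0 ≤ R i j)
    (hRpow : Tendsto (fun k : ℕ => R ^ k) atTop (nhds 0))
    (τ : Fin n → Fin n → ℝ) (τmin τmax : ℝ)
    (hτmin : 0 < τmin) (hτ : ∀ i j, τmin ≤ τ i j ∧ τ i j ≤ τmax)
    (T : ℝ) (hT : 0 < T)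
    (e c : Fin n → ℝ → ℝ)
    (he : ∀ i, Continuous (e i)) (hc : ∀ i, Continuous (c i))
    (henn : ∀ i t, 0 ≤ e i t) (hcnn : ∀ i t, 0 ≤ c i t)
    (heper : ∀ i t, e i (t + T) = e i t)
    (hcper : ∀ i t, c i (t + T) = c i t)
    (ε : ℝ) (hε : 0 < ε)
    (hstab : ∀ i,
      ((1 - R.transpose)⁻¹ *ᵥ (fun j => (1 / T) * ∫ t in (0:ℝ)..T, e j t)) i + ε
        < (1 / T) * ∫ t in (0:ℝ)..T, c i t)
    (x b : Fin n → ℝ → ℝ)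
    (hsol : IsNetworkSolution n R τ e c x b)
    (M : ℝ) (hbd : ∀ i t, 0 ≤ t → x i t ≤ M) :
    ∀ i, Tendsto (fun t : ℝ => ∫ s in (0:ℝ)..t, (c i s - b i s)) atTop atTop :=
  cumulative_unused_service_diverges_general n R hRnn hRpow τ τmin τmax hτmin hτ T hT e c he hc
    heper hcper ε hε hstab x b hsol
end

section
/- In the unique T-periodic trajectory x* of the stable network (stability condition c̄ > (I−Rᵀ)⁻¹ē + ε·1), every queue empties at least once per period: for each i there exists t_i ∈ [0,T] with x*(i)(t_i) = 0. Moreover the per-period average unused service vector equals ȳ = c̄ − (I−Rᵀ)⁻¹ē. -/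
open Set Filter MeasureTheory Matrix

lemma aux_isUnit_one_sub {n : ℕ} (A : Matrix (Fin n) (Fin n) ℝ)
    (h : Tendsto (fun k : ℕ => A ^ k) atTop (nhds 0)) : IsUnit (1 - A) := by
  rw [← Matrix.mulVec_injective_iff_isUnit]
  intro v w hvw
  have hv : (1 - A) *ᵥ (v - w) = 0 := by
    rw [Matrix.mulVec_sub, hvw, sub_self]
  set u := v - w with hu
  have hAu : A *ᵥ u = u := by
    rw [Matrix.sub_mulVec, Matrix.one_mulVec, sub_eq_zero] at hv
    exact hv.symm
  have hk : ∀ k : ℕ, (A ^ k) *ᵥ u = u := by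
    intro k
    induction k with
    | zero => simp
    | succ k ih => rw [pow_succ, ← Matrix.mulVec_mulVec, hAu, ih]
  have hc : Continuous fun M : Matrix (Fin n) (Fin n) ℝ => M *ᵥ u :=
    (continuous_id.matrix_mulVec continuous_const)
  have h2 : Tendsto (fun k : ℕ => (A ^ k) *ᵥ u) atTop (nhds ((0 : Matrix (Fin n) (Fin n) ℝ) *ᵥ u)) :=
    (hc.tendsto 0).comp h
  simp only [hk, Matrix.zero_mulVec] at h2
  have : u = 0 := tendsto_nhds_unique tendsto_const_nhds h2
  exact sub_eq_zero.mp this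

lemma aux_shift_integral (b : ℝ → ℝ)
    (hint : ∀ s t : ℝ, IntervalIntegrable b volume s t)
    (T τ τmax : ℝ) (hτ0 : 0 ≤ τ) (hττ : τ ≤ τmax)
    (hper : ∀ t, -τmax ≤ t → b (t + T) = b t) :
    (∫ s in (0:ℝ)..T, b (s - τ)) = ∫ s in (0:ℝ)..T, b s := by
  rw [intervalIntegral.integral_comp_sub_right]
  have h1 : (∫ s in (-τ)..(0:ℝ), b s) = ∫ s in (T - τ)..T, b s := by
    have e1 : (∫ s in (-τ)..(0:ℝ), b (s + T)) = ∫ s in (T - τ)..T, b s := by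
      rw [intervalIntegral.integral_comp_add_right, show -τ + T = T - τ by ring, zero_add]
    rw [← e1]
    apply intervalIntegral.integral_congr
    intro x hx
    rw [Set.uIcc_of_le (by linarith : -τ ≤ (0:ℝ))] at hx
    exact (hper x (le_trans (by linarith) hx.1)).symm
  have h2 : (∫ s in (-τ)..(0:ℝ), b s) + ∫ s in (0:ℝ)..(T - τ), b s
      = ∫ s in (-τ)..(T - τ), b s :=
    intervalIntegral.integral_add_adjacent_intervals (hint _ _) (hint _ _)
  have h3 : (∫ s in (0:ℝ)..(T - τ), b s) + ∫ s in (T - τ)..T, b s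
      = ∫ s in (0:ℝ)..T, b s :=
    intervalIntegral.integral_add_adjacent_intervals (hint _ _) (hint _ _)
  rw [show (0:ℝ) - τ = -τ by ring]
  linarith [h1, h2, h3]

/-- In the unique periodic trajectory of the stable network, every queue
empties at least once per period, and the per-period average unused service
vector equals `ȳ = c̄ − (I − Rᵀ)⁻¹ ē`. -/
theorem periodic_trajectory_clears_and_unused_service
    (n : ℕ) (R : Matrix (Fin n) (Fin n) ℝ)
    (hRnn : ∀ i j, 0 ≤ R i j)
    (hRpow : Tendsto (fun k : ℕ => R ^ k) atTop (nhds 0))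
    (τ : Fin n → Fin n → ℝ) (τmin τmax : ℝ)
    (hτmin : 0 < τmin) (hτ : ∀ i j, τmin ≤ τ i j ∧ τ i j ≤ τmax)
    (T : ℝ) (hT : 0 < T)
    (e c : Fin n → ℝ → ℝ)
    (he : ∀ i, Continuous (e i)) (hc : ∀ i, Continuous (c i))
    (henn : ∀ i t, 0 ≤ e i t) (hcnn : ∀ i t, 0 ≤ c i t)
    (heper : ∀ i t, e i (t + T) = e i t)
    (hcper : ∀ i t, c i (t + T) = c i t)
    (ε : ℝ) (hε : 0 < ε)
    (hstab : ∀ i,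
      ((1 - R.transpose)⁻¹ *ᵥ (fun j => (1 / T) * ∫ t in (0:ℝ)..T, e j t)) i + ε
        < (1 / T) * ∫ t in (0:ℝ)..T, c i t)
    (xs bs : Fin n → ℝ → ℝ)
    (hsol : IsNetworkSolution n R τ e c xs bs)
    (hxper : ∀ i t, 0 ≤ t → xs i (t + T) = xs i t)
    (hbper : ∀ i t, -τmax ≤ t → bs i (t + T) = bs i t) :
    (∀ i, ∃ t ∈ Icc (0:ℝ) T, xs i t = 0) ∧
    (∀ i, (1 / T) * ∫ t in (0:ℝ)..T, (c i t - bs i t)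
        = (1 / T) * (∫ t in (0:ℝ)..T, c i t)
          - ((1 - R.transpose)⁻¹ *ᵥ (fun j => (1 / T) * ∫ t in (0:ℝ)..T, e j t)) i) := by
  obtain ⟨hxc, hbm, hbi, hxeq, hxnn, hbnn, hbc, hbx⟩ := hsol
  set B : Fin n → ℝ := fun i => ∫ t in (0:ℝ)..T, bs i t with hB
  set E : Fin n → ℝ := fun i => ∫ t in (0:ℝ)..T, e i t with hE
  -- integrability of the delayed terms
  have hdel : ∀ j i, IntervalIntegrable (fun s => bs j (s - τ j i)) volume 0 T := by
    intro j i
    have := (hbi j (-(τ j i)) (T - τ j i)).comp_sub_right (τ j i)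
    simpa using this
  have hdelmul : ∀ j i, IntervalIntegrable (fun s => bs j (s - τ j i) * R j i) volume 0 T :=
    fun j i => (hdel j i).mul_const _
  -- flow balance
  have hbal : ∀ i, E i - B i + ∑ j, B j * R j i = 0 := by
    intro i
    have hTeq := hxeq i T hT.le
    have hper0 : xs i T = xs i 0 := by
      have := hxper i 0 le_rfl
      simpa using this
    rw [hper0] at hTeq
    have hint0 : (∫ s in (0:ℝ)..T,
        (e i s - bs i s + ∑ j, bs j (s - τ j i) * R j i)) = 0 := by linarith
    have heqf : (fun s : ℝ => ∑ j, bs j (s - τ j i) * R j i)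
        = ∑ j : Fin n, fun s => bs j (s - τ j i) * R j i := by
      funext s; simp
    have hsum : IntervalIntegrable (fun s => ∑ j, bs j (s - τ j i) * R j i) volume 0 T := by
      rw [heqf]
      exact IntervalIntegrable.sum Finset.univ (fun j _ => hdelmul j i)
    rw [intervalIntegral.integral_add (((he i).intervalIntegrable _ _).sub (hbi i 0 T)) hsum,
      intervalIntegral.integral_sub ((he i).intervalIntegrable _ _) (hbi i 0 T),
      intervalIntegral.integral_finset_sum (fun j _ => hdelmul j i)] at hint0
    have hterm : ∀ j, (∫ s in (0:ℝ)..T, bs j (s - τ j i) * R j i) = B j * R j i := by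
      intro j
      rw [intervalIntegral.integral_mul_const]
      congr 1
      exact aux_shift_integral (bs j) (hbi j) T (τ j i) τmax
        (le_of_lt (lt_of_lt_of_le hτmin (hτ j i).1)) (hτ j i).2 (hbper j)
    simp only [hterm] at hint0
    exact hint0
  -- matrix identity
  have hBE : (1 - R.transpose) *ᵥ B = E := by
    funext i
    rw [Matrix.sub_mulVec]
    simp only [Pi.sub_apply, Matrix.one_mulVec, Matrix.mulVec, dotProduct,
      Matrix.transpose_apply]
    have hcomm : ∑ j, R j i * B j = ∑ j, B j * R j i :=
      Finset.sum_congr rfl fun j _ => mul_comm _ _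
    rw [hcomm]
    linarith [hbal i]
  have hUnit : IsUnit (1 - R.transpose) := by
    apply aux_isUnit_one_sub
    have hcont : Continuous fun M : Matrix (Fin n) (Fin n) ℝ => M.transpose :=
      Continuous.matrix_transpose continuous_id
    have := (hcont.tendsto 0).comp hRpow
    simp only [Function.comp_def] at this
    have heq : (fun k : ℕ => (R ^ k).transpose) = fun k : ℕ => R.transpose ^ k := by
      funext k; exact (Matrix.transpose_pow R k)
    rw [heq] at this
    simpa using this
  have hUnitDet : IsUnit (1 - R.transpose).det :=
    (Matrix.isUnit_iff_isUnit_det _).mp hUnit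
  have hBinv : (1 - R.transpose)⁻¹ *ᵥ E = B := by
    rw [← hBE, Matrix.mulVec_mulVec, Matrix.nonsing_inv_mul _ hUnitDet, Matrix.one_mulVec]
  -- key identity for the averaged vector
  have hkey : ∀ i, ((1 - R.transpose)⁻¹ *ᵥ (fun j => (1 / T) * ∫ t in (0:ℝ)..T, e j t)) i
      = (1 / T) * B i := by
    intro i
    have hveq : (fun j => (1 / T) * ∫ t in (0:ℝ)..T, e j t) = (1 / T) • E := by
      funext j; simp [hE, smul_eq_mul]
    rw [hveq, Matrix.mulVec_smul, hBinv]
    simp [smul_eq_mul]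
  constructor
  · -- every queue empties
    intro i
    by_contra hcon
    push_neg at hcon
    have hpos : ∀ t ∈ Set.Icc (0:ℝ) T, 0 < xs i t := fun t ht =>
      lt_of_le_of_ne (hxnn i t ht.1) (Ne.symm (hcon t ht))
    have hBc : B i = ∫ t in (0:ℝ)..T, c i t := by
      apply intervalIntegral.integral_congr
      intro t ht
      rw [Set.uIcc_of_le hT.le] at ht
      exact hbx i t ht.1 (hpos t ht)
    have := hstab i
    rw [hkey i, hBc] at this
    linarith
  · -- average unused service
    intro i
    rw [hkey i, intervalIntegral.integral_sub ((hc i).intervalIntegrable _ _) (hbi i 0 T)]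
    ring
end

section
/- Consider a single queue with no external arrivals (e ≡ 0), 1-periodic service rate c(t) = 1 for t mod 1 ∈ [0, 1/2] and c(t) = 0 otherwise, where a fraction r = 1/2 of departing vehicles re-enter the queue after travel time τ = 1/2 and the rest leave. If the initial queue length satisfies 0 < x₀ < 1/2 and there are no vehicles in transit initially, then the queue length at integer times satisfies x(n) = (1/2)ⁿ x₀ for all n ∈ ℕ. In particular x(n) > 0 for all n, so the trajectory converges to the zero trajectory but never reaches it in finite time. -/
open Set Filter MeasureTheory

/-- Example 2 of the paper: a single queue with no external arrivals,
1-periodic service rate `c(t) = 1` for `t mod 1 ∈ [0, 1/2]` and `0`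
otherwise, where half of the departing vehicles re-enter after travel time
`1/2`.  Starting from `0 < x₀ < 1/2` with no vehicles in transit, the queue
length at integer times is `x(n) = (1/2)ⁿ x₀`; in particular it is always
positive, so the trajectory converges to the zero trajectory but never
reaches it in finite time. -/
theorem recirculation_infinite_time_convergence
    (c : ℝ → ℝ) (hc : ∀ t, c t = if Int.fract t ≤ 1 / 2 then 1 else 0)
    (x₀ : ℝ) (hx₀pos : 0 < x₀) (hx₀lt : x₀ < 1 / 2)
    (x b : ℝ → ℝ)
    (hxc : Continuous x)
    (hbmeas : Measurable b)
    (hbint : ∀ s t : ℝ, IntervalIntegrable b volume s t)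
    (hhist : ∀ s, s < 0 → b s = 0)          -- no vehicles in transit initially
    (hx0 : x 0 = x₀)
    (hdyn : ∀ t, 0 ≤ t →
      x t = x₀ + ∫ s in (0:ℝ)..t, ((1 / 2) * b (s - 1 / 2) - b s))
    (hxnn : ∀ t, 0 ≤ t → 0 ≤ x t)
    (hbnn : ∀ t, 0 ≤ b t)
    (hble : ∀ t, 0 ≤ t → b t ≤ c t)
    (hcomp : ∀ t, 0 ≤ t → 0 < x t → b t = c t) :
    (∀ n : ℕ, x n = (1 / 2) ^ n * x₀) ∧ (∀ n : ℕ, 0 < x n) := by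
  -- the shifted function is interval integrable on any interval
  have hbint' : ∀ u v : ℝ, IntervalIntegrable (fun s => b (s - 1 / 2)) volume u v := by
    intro u v
    have := (hbint (u - 1/2) (v - 1/2)).comp_sub_right (1/2)
    simpa using this
  have hInt : ∀ u v : ℝ,
      IntervalIntegrable (fun s => 1 / 2 * b (s - 1 / 2) - b s) volume u v := by
    intro u v
    exact ((hbint' u v).const_mul (1/2)).sub (hbint u v)
  -- difference form of the dynamics
  have hdiff : ∀ u v : ℝ, 0 ≤ u → 0 ≤ v →
      x v - x u = 1 / 2 * (∫ s in (u - 1/2)..(v - 1/2), b s) - ∫ s in u..v, b s := by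
    intro u v hu hv
    have h1 : x v - x u = ∫ s in u..v, (1 / 2 * b (s - 1 / 2) - b s) := by
      rw [hdyn v hv, hdyn u hu]
      have := intervalIntegral.integral_add_adjacent_intervals (hInt 0 u) (hInt u v)
      linarith [this]
    rw [h1, intervalIntegral.integral_sub ((hbint' u v).const_mul (1/2)) (hbint u v),
      intervalIntegral.integral_const_mul, intervalIntegral.integral_comp_sub_right b (1/2)]
  -- b vanishes in the past and when the service rate is zero
  have hbz : ∀ s : ℝ, s < 0 ∨ 1 / 2 < Int.fract s → b s = 0 := by
    intro s hs
    rcases hs with hs | hs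
    · exact hhist s hs
    · rcases lt_or_ge s 0 with h | h
      · exact hhist s h
      · have hcs : c s = 0 := by rw [hc s, if_neg (not_le.2 hs)]
        have := hble s h
        have := hbnn s
        linarith
  -- the integral of b over any subinterval of [m - 1/2, m] vanishes
  have hIz : ∀ (m : ℕ) (u v : ℝ), (m:ℝ) - 1/2 ≤ u → u ≤ v → v ≤ (m:ℝ) →
      ∫ s in u..v, b s = 0 := by
    intro m u v hu huv hv
    have hzero : ∀ s : ℝ, s ∈ Set.Ioo ((m:ℝ) - 1/2) (m:ℝ) → b s = 0 := by
      intro s hs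
      rcases Nat.eq_zero_or_pos m with rfl | hm
      · apply hbz; left; simpa using hs.2
      · apply hbz; right
        have hfloor : ⌊s⌋ = (m:ℤ) - 1 := by
          have h1 : (((m:ℤ) - 1 : ℤ) : ℝ) ≤ s := by push_cast; linarith [hs.1]
          have h2 : s < (((m:ℤ) - 1 : ℤ) : ℝ) + 1 := by push_cast; linarith [hs.2]
          exact Int.floor_eq_iff.mpr ⟨h1, h2⟩
        rw [Int.fract, hfloor]
        push_cast
        linarith [hs.1]
    apply intervalIntegral.integral_zero_ae
    have hv0 : (volume : Measure ℝ) {v} = 0 := Real.volume_singleton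
    have h1 : ∀ᵐ s : ℝ, s ≠ v := by
      rw [MeasureTheory.ae_iff]
      convert hv0 using 2
      ext s; simp
    filter_upwards [h1] with s hs hmem
    rw [Set.uIoc_of_le huv] at hmem
    exact hzero s ⟨lt_of_le_of_lt hu hmem.1, lt_of_lt_of_le (lt_of_le_of_ne hmem.2 hs) hv⟩
  -- one step of the recursion
  have step : ∀ n : ℕ, x n < 1/2 → x ((n:ℝ) + 1) = 1/2 * x n := by
    intro n hlt
    set N : ℝ := (n:ℝ) with hN
    have hN0 : (0:ℝ) ≤ N := Nat.cast_nonneg n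
    -- on the first half cycle, x t = x N - ∫_N^t b
    have hxt : ∀ t, N ≤ t → t ≤ N + 1/2 → x t = x N - ∫ s in N..t, b s := by
      intro t h1 h2
      have h0t : (0:ℝ) ≤ t := le_trans hN0 h1
      have hd := hdiff N t hN0 h0t
      have hz : ∫ s in (N - 1/2)..(t - 1/2), b s = 0 := by
        apply hIz n (N - 1/2) (t - 1/2) le_rfl (by linarith) (by simp [hN]; linarith)
      rw [hz] at hd
      linarith
    -- the queue empties at the end of the first half cycle
    have hhalf : x (N + 1/2) = 0 := by
      by_contra h
      have hpos : 0 < x (N + 1/2) := lt_of_le_of_ne (hxnn _ (by linarith)) (Ne.symm h)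
      have hxpos : ∀ t, N ≤ t → t ≤ N + 1/2 → 0 < x t := by
        intro t h1 h2
        have := hxt t h1 h2
        have h3 := hxt (N + 1/2) (by linarith) le_rfl
        have hsplit := intervalIntegral.integral_add_adjacent_intervals
          (hbint N t) (hbint t (N + 1/2))
        have hnn : 0 ≤ ∫ s in t..(N + 1/2), b s :=
          intervalIntegral.integral_nonneg h2 (fun u _ => hbnn u)
        nlinarith
      have hb1 : ∀ t ∈ Set.uIcc N (N + 1/2), b t = 1 := by
        intro t ht
        rw [Set.uIcc_of_le (by linarith)] at ht
        have h0t : (0:ℝ) ≤ t := le_trans hN0 ht.1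
        rw [hcomp t h0t (hxpos t ht.1 ht.2), hc t]
        rw [if_pos]
        have hfloor : ⌊t⌋ = (n:ℤ) := by
          rw [Int.floor_eq_iff]
          constructor
          · push_cast; exact ht.1
          · push_cast; linarith [ht.2]
        rw [Int.fract, hfloor]
        push_cast
        linarith [ht.2]
      have : ∫ s in N..(N + 1/2), b s = 1/2 := by
        rw [intervalIntegral.integral_congr hb1]
        simp
      have h3 := hxt (N + 1/2) (by linarith) le_rfl
      have h4 := hxnn (N + 1/2) (by linarith)
      rw [this] at h3
      linarith
    have hint : ∫ s in N..(N + 1/2), b s = x N := by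
      have h3 := hxt (N + 1/2) (by linarith) le_rfl
      rw [hhalf] at h3
      linarith
    -- second half cycle
    have hd2 := hdiff (N + 1/2) (N + 1) (by linarith) (by linarith)
    have e1 : N + 1/2 - 1/2 = N := by ring
    have e2 : N + 1 - 1/2 = N + 1/2 := by ring
    rw [e1, e2, hint] at hd2
    have hz2 : ∫ s in (N + 1/2)..(N + 1), b s = 0 := by
      apply hIz (n + 1) (N + 1/2) (N + 1) (by push_cast [hN]; linarith) (by linarith)
        (by push_cast [hN]; linarith)
    rw [hz2, hhalf] at hd2
    linarith
  have main : ∀ n : ℕ, x n = (1 / 2) ^ n * x₀ := by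
    intro n
    induction n with
    | zero => simpa using hx0
    | succ k ih =>
      have hlt : x k < 1/2 := by
        rw [ih]
        have h1 : (1/2:ℝ)^k ≤ 1 := pow_le_one₀ (by norm_num) (by norm_num)
        nlinarith
      have hs := step k hlt
      push_cast
      rw [hs, ih]
      ring
  exact ⟨main, fun n => by rw [main n]; positivity⟩
end
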